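/- arXiv:2401.00985 — 13 statements merged into one kernel-verified Lean document; each statement's English description precedes it below -/
import Mathlib

section
/- (Skornyakov's identity) In a right alternative algebra A over a field F of characteristic not 2, the identity a((bc)b) = ((ab)c)b holds for all a, b, c ∈ A. -/
/-- Skornyakov's identity: in a right alternative algebra over a field of
characteristic not `2`, `a((bc)b) = ((ab)c)b` for all `a, b, c`. -/
theorem rightAlternative_skornyakov
    {F A : Type*} [Field F] [NonUnitalNonAssocRing A]
    [Module F A] [SMulCommClass F A A] [IsScalarTower F A A]
    (h2 : (2 : F) ≠ 0)
    (hra : ∀ a b : A, (a * b) * b = a * (b * b)) :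
    ∀ a b c : A, a * ((b * c) * b) = ((a * b) * c) * b := by
  -- Linearized right alternativity
  have lin : ∀ x y z : A, (x*y)*z + (x*z)*y = x*(y*z) + x*(z*y) := by
    intro x y z
    have h := hra x (y + z)
    simp only [mul_add, add_mul] at h
    linear_combination (norm := abel1) h - hra x y - hra x z
  intro a b c
  have h6 : ((a*b)*b)*c = (a*(b*b))*c := congrArg (· * c) (hra a b)
  have h7 : ((a*b)*c)*b + ((a*c)*b)*b = (a*(b*c))*b + (a*(c*b))*b := by
    have := congrArg (· * b) (lin a b c)
    simpa [add_mul] using this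
  have h8 : a*((b*b)*c) + a*((b*c)*b) = a*(b*(b*c)) + a*(b*(c*b)) := by
    have := congrArg (a * ·) (lin b b c)
    simpa [mul_add] using this
  have h9 : a*((c*b)*b) = a*(c*(b*b)) := congrArg (a * ·) (hra c b)
  have goal2 : ((a*b)*c)*b + ((a*b)*c)*b = a*((b*c)*b) + a*((b*c)*b) := by
    linear_combination (norm := abel1)
      (lin a b (c*b)) + (lin a b (b*c)) - (lin a c (b*b)) - (hra (a*c) b)
        + (lin (a*b) c b) - h6 + h7 - h8 + h9
  have h2s : (2:F) • (a*((b*c)*b)) = (2:F) • (((a*b)*c)*b) := by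
    rw [two_smul, two_smul]; exact goal2.symm
  have := congrArg (fun v : A => (2:F)⁻¹ • v) h2s
  simpa [smul_smul, inv_mul_cancel₀ h2] using this
end

section
/- In a unital left alternative algebra A over a field of characteristic not 2, an element b is an inverse of a (i.e., ab = ba = 1) if and only if L_a L_b = id = L_b L_a, where L_x denotes left multiplication by x. Consequently each element has at most one inverse. -/
/-- In a unital left alternative algebra over a field of characteristic not `2`,
`b` is an inverse of `a` iff `L_a L_b = id = L_b L_a`; consequently inverses are
unique. -/
theorem leftAlternative_inverse_iff_mulLeft
    {F A : Type*} [Field F] [NonAssocRing A]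
    [Module F A] [SMulCommClass F A A] [IsScalarTower F A A]
    (h2 : (2 : F) ≠ 0)
    (hla : ∀ a b : A, a * (a * b) = (a * a) * b) (a : A) :
    (∀ b : A, (a * b = 1 ∧ b * a = 1) ↔
      ((∀ c : A, a * (b * c) = c) ∧ (∀ c : A, b * (a * c) = c))) ∧
    (∀ b b' : A, (a * b = 1 ∧ b * a = 1) → (a * b' = 1 ∧ b' * a = 1) → b = b') := by
  -- cancellation of doubling via char ≠ 2
  have two_cancel : ∀ x y : A, x + x = y + y → x = y := by
    intro x y h
    have h' : (2 : F) • x = (2 : F) • y := by rw [two_smul, two_smul]; exact h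
    exact smul_right_injective A h2 h'
  -- linearized left alternative law
  have lin : ∀ x y c : A, x * (y * c) + y * (x * c) = (x * y) * c + (y * x) * c := by
    intro x y c
    have h := hla (x + y) c
    simp only [add_mul, mul_add, hla x c, hla y c] at h
    linear_combination (norm := abel1) h
  have key : ∀ b : A, a * b = 1 → b * a = 1 →
      (∀ c : A, a * (b * c) = c) ∧ (∀ c : A, b * (a * c) = c) := by
    intro b hab hba
    have star : ∀ c : A, a * (b * c) + b * (a * c) = c + c := by
      intro c
      have h := lin a b c
      rwa [hab, hba, one_mul] at h
    have hab2 : (a * a) * b = a := by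
      have h := hla a b
      rw [hab, mul_one] at h
      exact h.symm
    have hba2 : b * (a * a) = a := by
      have h := lin b a a
      rw [hba, hab, one_mul, mul_one] at h
      exact add_right_cancel h
    have e2 : ∀ c : A, (a * a) * (b * c) + a * (b * (a * c)) = a * c + a * c := by
      intro c
      have h := congrArg (fun z => a * z) (star c)
      simp only [mul_add] at h
      rwa [hla a (b * c)] at h
    have hcomm : ∀ c : A, b * ((a * a) * c) = (a * a) * (b * c) := by
      intro c
      have e1 := star (a * c)
      rw [hla a c] at e1
      have h := e1.trans (e2 c).symm
      rw [add_comm ((a * a) * (b * c))] at h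
      exact add_left_cancel h
    have hA : ∀ c : A, (a * a) * (b * c) = a * c := by
      intro c
      have h := lin (a * a) b c
      rw [hab2, hba2, hcomm c] at h
      exact two_cancel _ _ h
    have aq : ∀ c : A, a * (b * (a * c)) = a * c := by
      intro c
      have h := e2 c
      rw [hA c] at h
      exact add_left_cancel h
    have hP : ∀ c : A, a * (b * c) = c := by
      intro c
      have e := star (a * (b * c))
      rw [aq (b * c), hla a (b * c), hA c] at e
      exact (two_cancel _ _ ((star c).symm.trans e)).symm
    have hQ : ∀ c : A, b * (a * c) = c := by
      intro c
      have h := star c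
      rw [hP c] at h
      exact add_left_cancel h
    exact ⟨hP, hQ⟩
  constructor
  · intro b
    constructor
    · rintro ⟨hab, hba⟩
      exact key b hab hba
    · rintro ⟨hP, hQ⟩
      exact ⟨by simpa using hP 1, by simpa using hQ 1⟩
  · rintro b b' ⟨hab, hba⟩ ⟨hab', hba'⟩
    have h := (key b hab hba).2 b'
    rw [hab', mul_one] at h
    exact h
end

section
/- Let A be a unital alternative algebra and a ∈ A. Then a is invertible in A if and only if the left multiplication operator L_a is an invertible linear map on A, in which case L_a^{-1} = L_{a^{-1}}. -/
namespace AltAux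

variable {A : Type*} [NonAssocRing A]

def asc (x y z : A) : A := (x*y)*z - x*(y*z)

theorem asc_skew12 (hla : ∀ a b : A, a * (a * b) = (a * a) * b) (x y z : A) :
    asc y x z = - asc x y z := by
  have h := hla (x+y) z
  have h1 := hla x z
  have h2 := hla y z
  simp only [asc, add_mul, mul_add] at *
  linear_combination (norm := abel) h1 + h2 - h

theorem asc_skew23 (hra : ∀ a b : A, (a * b) * b = a * (b * b)) (x y z : A) :
    asc x z y = - asc x y z := by
  have h := hra x (y+z)
  have h1 := hra x y
  have h2 := hra x z
  simp only [asc, add_mul, mul_add] at *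
  linear_combination (norm := abel) h - h1 - h2

theorem asc_cyc (hla : ∀ a b : A, a * (a * b) = (a * a) * b)
    (hra : ∀ a b : A, (a * b) * b = a * (b * b)) (x y z : A) :
    asc x y z = asc y z x := by
  rw [asc_skew12 hla y x z, asc_skew23 hra y z x, neg_neg]

theorem asc_aab (hla : ∀ a b : A, a * (a * b) = (a * a) * b) (x z : A) :
    asc x x z = 0 := by
  rw [asc, hla, sub_self]

theorem teich (w x y z : A) :
    asc (w*x) y z - asc w (x*y) z + asc w x (y*z) = w * asc x y z + asc w x y * z := by
  simp only [asc, mul_sub, sub_mul]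
  abel

theorem asc_a_amul (hla : ∀ a b : A, a * (a * b) = (a * a) * b) (a x y : A) :
    asc a (a*x) y = asc (a*a) x y - a * asc a x y := by
  have t := teich a a x y
  rw [asc_aab hla a (x*y), asc_aab hla a x, zero_mul, add_zero, add_zero] at t
  linear_combination (norm := abel) -t

theorem asc_middle (hla : ∀ a b : A, a * (a * b) = (a * a) * b)
    (hra : ∀ a b : A, (a * b) * b = a * (b * b)) (a x y : A) :
    asc a (x*a) y = a * asc a x y := by
  have flex : asc a x a = 0 := by
    rw [asc_skew23 hra a a x, asc_aab hla, neg_zero]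
  have t := teich a x a y
  have h1 : asc (a*x) a y = - asc a (a*x) y := asc_skew12 hla a (a*x) y
  have h2 := asc_a_amul hla a x y
  have h3 := asc_a_amul hla a y x
  have h4 : asc a x (a*y) = - asc a (a*y) x := asc_skew23 hra a (a*y) x
  have h5 : asc (a*a) y x = - asc (a*a) x y := asc_skew23 hra (a*a) x y
  have h6 : asc a y x = - asc a x y := asc_skew23 hra a x y
  have h7 : asc x a y = - asc a x y := asc_skew12 hla a x y
  rw [h5, h6, mul_neg] at h3
  rw [h1, h7, mul_neg, flex, zero_mul, add_zero] at t
  linear_combination (norm := abel) -t - h2 + h4 - h3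

theorem left_moufang (hla : ∀ a b : A, a * (a * b) = (a * a) * b)
    (hra : ∀ a b : A, (a * b) * b = a * (b * b)) (a x y : A) :
    ((a*x)*a)*y = a*(x*(a*y)) := by
  have flex0 : asc a x a = 0 := by
    rw [asc_skew23 hra a a x, asc_aab hla, neg_zero]
  have flex : (a*x)*a = a*(x*a) := sub_eq_zero.mp flex0
  have hm := asc_middle hla hra a x y
  have h7 : asc x a y = - asc a x y := asc_skew12 hla a x y
  rw [show asc a x y = - asc x a y by rw [h7, neg_neg], mul_neg] at hm
  simp only [asc, mul_sub] at hm
  rw [flex]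
  linear_combination (norm := abel) hm

theorem right_moufang (hla : ∀ a b : A, a * (a * b) = (a * a) * b)
    (hra : ∀ a b : A, (a * b) * b = a * (b * b)) (a x y : A) :
    ((y*a)*x)*a = y*(a*(x*a)) := by
  have hla' : ∀ p q : Aᵐᵒᵖ, p * (p * q) = (p * p) * q := by
    intro p q
    apply MulOpposite.unop_injective
    simp only [MulOpposite.unop_mul]
    exact hra q.unop p.unop
  have hra' : ∀ p q : Aᵐᵒᵖ, (p * q) * q = p * (q * q) := by
    intro p q
    apply MulOpposite.unop_injective
    simp only [MulOpposite.unop_mul]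
    exact hla q.unop p.unop
  have h := left_moufang hla' hra' (MulOpposite.op a) (MulOpposite.op x) (MulOpposite.op y)
  have h2 := congrArg MulOpposite.unop h
  simp only [MulOpposite.unop_mul, MulOpposite.unop_op] at h2
  exact h2.symm




theorem key (hla : ∀ a b : A, a * (a * b) = (a * a) * b)
    (hra : ∀ a b : A, (a * b) * b = a * (b * b))
    {a b : A} (hab : a*b = 1) (hba : b*a = 1) (x : A) :
    a*(b*x) = x ∧ b*(a*x) = x := by
  have hbw : b * asc a b x = 0 := by
    have lm := left_moufang hla hra b a x
    rw [hba, one_mul] at lm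
    rw [asc, hab, one_mul, mul_sub, ← lm, sub_self]
  have hwa : asc a b x * a = 0 := by
    have cyc : asc x a b = asc a b x := asc_cyc hla hra x a b
    have rm := right_moufang hla hra a b x
    rw [hba, mul_one] at rm
    have hxab : (x*a)*b = x + asc a b x := by
      have h := cyc
      rw [asc, hab, mul_one] at h
      have := eq_add_of_sub_eq h
      rw [this, add_comm]
    rw [hxab, add_mul] at rm
    exact add_eq_left.mp rm
  have hw0 : asc a b x = 0 := by
    have h1 : asc a b (asc a b x) = asc a b x := by
      rw [asc, hab, one_mul, hbw, mul_zero, sub_zero]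
    have h2 : asc a b (asc a b x) = 0 := by
      rw [asc_cyc hla hra a b (asc a b x), asc, hbw, zero_mul, hwa, mul_zero, sub_zero]
    rw [← h1, h2]
  constructor
  · have h := hw0
    rw [asc, hab, one_mul] at h
    exact (sub_eq_zero.mp h).symm
  · have hskew := asc_skew12 hla a b x
    rw [hw0, neg_zero] at hskew
    rw [asc, hba, one_mul] at hskew
    exact (sub_eq_zero.mp hskew).symm

end AltAux



/-- In a unital alternative algebra, `a` is invertible iff the left
multiplication operator `L_a` is an invertible linear map, in which case
`L_a⁻¹ = L_{a⁻¹}`. -/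
theorem alternative_invertible_iff_mulLeft_bijective
    {F A : Type*} [Field F] [NonAssocRing A]
    [Module F A] [SMulCommClass F A A] [IsScalarTower F A A]
    (hla : ∀ a b : A, a * (a * b) = (a * a) * b)
    (hra : ∀ a b : A, (a * b) * b = a * (b * b))
    (a : A) :
    ((∃ b : A, a * b = 1 ∧ b * a = 1) ↔
      Function.Bijective (LinearMap.mulLeft F a)) ∧
    (∀ b : A, a * b = 1 → b * a = 1 →
      ∀ x : A, a * (b * x) = x ∧ b * (a * x) = x) := by
  constructor
  · constructor
    · rintro ⟨b, hab, hba⟩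
      apply Function.bijective_iff_has_inverse.mpr
      refine ⟨fun x => b * x, fun x => ?_, fun x => ?_⟩
      · simp only [LinearMap.mulLeft_apply]
        exact (AltAux.key hla hra hab hba x).2
      · simp only [LinearMap.mulLeft_apply]
        exact (AltAux.key hla hra hab hba x).1
    · intro hbij
      obtain ⟨b, hb⟩ := hbij.2 1
      rw [LinearMap.mulLeft_apply] at hb
      have hba : b * a = 1 := by
        apply hbij.1
        simp only [LinearMap.mulLeft_apply, mul_one]
        have lm := AltAux.left_moufang hla hra a b 1
        simp only [hb, one_mul, mul_one] at lm
        exact lm.symm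
      exact ⟨b, hb, hba⟩
  · intro b hab hba x
    exact AltAux.key hla hra hab hba x
end

section
/- An alternative algebra A over a field F with no nontrivial left zero-divisors and containing a nonzero algebraic element is unital. Moreover, in such an algebra, for a, b ∈ A, ab = 1 if and only if ba = 1. -/
/-- An alternative algebra over a field `F` with no nontrivial left
zero-divisors containing a nonzero algebraic element is unital; moreover in
such an algebra `ab = 1` iff `ba = 1`. -/
theorem alternative_noLeftZeroDivisors_algebraic_unital
    {F A : Type*} [Field F] [NonUnitalNonAssocRing A]
    [Module F A] [SMulCommClass F A A] [IsScalarTower F A A]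
    (hla : ∀ a b : A, a * (a * b) = (a * a) * b)
    (hra : ∀ a b : A, (a * b) * b = a * (b * b))
    (hlzd : ∀ a b : A, a ≠ 0 → a * b = 0 → b = 0)
    (halg : ∃ a : A, a ≠ 0 ∧
      FiniteDimensional F (NonUnitalAlgebra.adjoin F {a})) :
    ∃ e : A, e ≠ 0 ∧ (∀ x : A, e * x = x ∧ x * e = x) ∧
      (∀ a b : A, a * b = e ↔ b * a = e) := by
  obtain ⟨a, ha, hfd⟩ := halg
  -- linearized left alternative law
  have hlin : ∀ x y z : A, x*(y*z) + y*(x*z) = (x*y)*z + (y*x)*z := by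
    intro x y z
    have h := hla (x + y) z
    simp only [add_mul, mul_add] at h
    rw [hla x z, hla y z] at h
    rw [← sub_eq_zero] at h ⊢
    rw [← h]
    abel
  -- flexible law
  have hflex : ∀ x y : A, (y*x)*y = y*(x*y) := by
    intro x y
    have h := hlin y x y
    rw [hra x y] at h
    -- h : y*(x*y) + x*(y*y) = (y*x)*y + x*(y*y)
    exact (add_right_cancel h).symm
  set B := NonUnitalAlgebra.adjoin F {a} with hB
  have haB : a ∈ B := NonUnitalAlgebra.self_mem_adjoin_singleton F a
  let L : B →ₗ[F] B :=
    { toFun := fun x => ⟨a * x, mul_mem haB x.2⟩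
      map_add' := fun x y => Subtype.ext (mul_add a x y)
      map_smul' := fun c x => Subtype.ext (mul_smul_comm c a x) }
  have hinj : Function.Injective L := by
    intro x y h
    have h' : a * ((x : A) - y) = 0 := by
      rw [mul_sub, sub_eq_zero]
      exact congrArg Subtype.val h
    have := hlzd a _ ha h'
    exact Subtype.ext (sub_eq_zero.mp this)
  have hsurj := (LinearMap.injective_iff_surjective (f := L)).mp hinj
  obtain ⟨e₀, he₀⟩ := hsurj ⟨a, haB⟩
  set e : A := (e₀ : A) with he
  have hae : a * e = a := congrArg Subtype.val he₀
  have hne : e ≠ 0 := by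
    intro h
    rw [h, mul_zero] at hae
    exact ha hae.symm
  have hidem : e * e = e := by
    have h : a * (e * e - e) = 0 := by
      rw [mul_sub, ← hra a e, hae, hae, sub_self]
    exact sub_eq_zero.mp (hlzd a _ ha h)
  have hleft : ∀ x : A, e * x = x := by
    intro x
    have h : e * (e * x - x) = 0 := by
      rw [mul_sub, hla e x, hidem, sub_self]
    exact sub_eq_zero.mp (hlzd e _ hne h)
  have hright : ∀ x : A, x * e = x := by
    intro x
    by_contra hx
    have h : (x * e - x) * e = 0 := by
      rw [sub_mul, hra x e, hidem, sub_self]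
    have := hlzd _ e (sub_ne_zero.mpr hx) h
    exact hne this
  have key : ∀ p q : A, p * q = e → q * p = e := by
    intro p q hpq
    have hq : q ≠ 0 := by
      intro h; rw [h, mul_zero] at hpq; exact hne hpq.symm
    have h : (q * p - e) * q = 0 := by
      rw [sub_mul, hflex p q, hpq, hright q, hleft q, sub_self]
    by_contra hqp
    exact hq (hlzd _ q (sub_ne_zero.mpr (fun h' => hqp h')) h)
  exact ⟨e, hne, fun x => ⟨hleft x, hright x⟩, fun p q => ⟨key p q, key q p⟩⟩
end

section
/- An alternative one-sided division algebra over a field F is a division algebra in the classical sense: it is unital and every nonzero element is invertible. -/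
section Aux

variable {A : Type*} [NonUnitalNonAssocRing A]

private lemma lin_left (hla : ∀ a b : A, a * (a * b) = (a * a) * b)
    (a b x : A) : a * (b * x) + b * (a * x) = (a * b) * x + (b * a) * x := by
  refine add_right_cancel (b := (a * a) * x + (b * b) * x) ?_
  calc a * (b * x) + b * (a * x) + ((a * a) * x + (b * b) * x)
      = (a + b) * ((a + b) * x) := by
        simp only [mul_add, add_mul, hla]; abel
    _ = ((a + b) * (a + b)) * x := hla _ _
    _ = (a * b) * x + (b * a) * x + ((a * a) * x + (b * b) * x) := by
        simp only [mul_add, add_mul]; abel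

private lemma lin_right (hra : ∀ a b : A, (a * b) * b = a * (b * b))
    (a b x : A) : (x * a) * b + (x * b) * a = x * (a * b) + x * (b * a) := by
  refine add_right_cancel (b := x * (a * a) + x * (b * b)) ?_
  calc (x * a) * b + (x * b) * a + (x * (a * a) + x * (b * b))
      = (x * (a + b)) * (a + b) := by
        simp only [mul_add, add_mul, hra]; abel
    _ = x * ((a + b) * (a + b)) := hra _ _
    _ = x * (a * b) + x * (b * a) + (x * (a * a) + x * (b * b)) := by
        simp only [mul_add, add_mul]; abel

private lemma flex (hla : ∀ a b : A, a * (a * b) = (a * a) * b)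
    (hra : ∀ a b : A, (a * b) * b = a * (b * b))
    (a b : A) : a * (b * a) = (a * b) * a := by
  have h := lin_left hla a b a
  rw [hra b a] at h
  -- h : a*(b*a) + b*(a*a) = (a*b)*a + b*(a*a)
  exact add_right_cancel h

end Aux

/-- An alternative one-sided division algebra over a field `F` is a division
algebra in the classical sense: it is unital and every nonzero element has a
two-sided inverse. -/
theorem alternative_oneSidedDivision_classicalDivision
    {F A : Type*} [Field F] [NonUnitalNonAssocRing A] [Nontrivial A]
    [Module F A] [SMulCommClass F A A] [IsScalarTower F A A]
    (hla : ∀ a b : A, a * (a * b) = (a * a) * b)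
    (hra : ∀ a b : A, (a * b) * b = a * (b * b))
    (hdiv : (∀ a : A, a ≠ 0 → Function.Bijective (fun x : A => a * x)) ∨
            (∀ a : A, a ≠ 0 → Function.Bijective (fun x : A => x * a))) :
    ∃ e : A, e ≠ 0 ∧ (∀ x : A, e * x = x ∧ x * e = x) ∧
      (∀ a : A, a ≠ 0 → ∃ b : A, a * b = e ∧ b * a = e) := by
  rcases hdiv with hld | hrd
  · -- left division
    have hzero : ∀ c : A, (∀ y : A, c * y = 0) → c = 0 := by
      intro c hc
      by_contra hc0
      exact hc0 ((hld c hc0).1 (a₁ := c) (a₂ := 0) (by simp [hc c]))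
    obtain ⟨a, ha⟩ := exists_ne (0 : A)
    obtain ⟨e, he⟩ := (hld a ha).2 a
    simp only at he
    have he0 : e ≠ 0 := by rintro rfl; rw [mul_zero] at he; exact ha he.symm
    have hee : e * e = e :=
      (hld a ha).1 (a₁ := e * e) (a₂ := e)
        ((hra a e).symm.trans (congrArg (· * e) he))
    have hleft : ∀ x : A, e * x = x := by
      intro x
      have h := hla e x
      rw [hee] at h
      exact (hld e he0).1 (a₁ := e * x) (a₂ := x) h
    have hright : ∀ x : A, x * e = x := by
      intro x
      have key : ∀ y : A, (x * e - x) * y = 0 := by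
        intro y
        have h := lin_left hla e x y
        rw [hleft (x * y), hleft y, hleft x] at h
        -- h : x*y + x*y = x*y + (x*e)*y
        have h2 : x * y = (x * e) * y := add_left_cancel h
        rw [sub_mul, ← h2, sub_self]
      exact sub_eq_zero.mp (hzero _ key)
    refine ⟨e, he0, fun x => ⟨hleft x, hright x⟩, ?_⟩
    intro c hc
    obtain ⟨b, hb⟩ := (hld c hc).2 e
    simp only at hb
    refine ⟨b, hb, ?_⟩
    have h := flex hla hra c b
    rw [hb, hleft c] at h
    -- h : c * (b * c) = c
    exact (hld c hc).1 (a₁ := b * c) (a₂ := e)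
      (show c * (b * c) = c * e by rw [hright c]; exact h)
  · -- right division
    have hzero : ∀ c : A, (∀ y : A, y * c = 0) → c = 0 := by
      intro c hc
      by_contra hc0
      exact hc0 ((hrd c hc0).1 (a₁ := c) (a₂ := 0) (by simp [hc c]))
    obtain ⟨a, ha⟩ := exists_ne (0 : A)
    obtain ⟨e, he⟩ := (hrd a ha).2 a
    simp only at he
    have he0 : e ≠ 0 := by rintro rfl; rw [zero_mul] at he; exact ha he.symm
    have hee : e * e = e :=
      (hrd a ha).1 (a₁ := e * e) (a₂ := e)
        ((hla e a).symm.trans (congrArg (e * ·) he))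
    have hright : ∀ x : A, x * e = x := by
      intro x
      have h := hra x e
      rw [hee] at h
      exact (hrd e he0).1 (a₁ := x * e) (a₂ := x) h
    have hleft : ∀ x : A, e * x = x := by
      intro x
      have key : ∀ y : A, y * (e * x - x) = 0 := by
        intro y
        have h := lin_right hra e x y
        rw [hright y, hright (y * x), hright x] at h
        -- h : y*x + y*x = y*(e*x) + y*x
        have h2 : y * x = y * (e * x) := add_right_cancel h
        rw [mul_sub, ← h2, sub_self]
      exact sub_eq_zero.mp (hzero _ key)
    refine ⟨e, he0, fun x => ⟨hleft x, hright x⟩, ?_⟩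
    intro c hc
    obtain ⟨b, hb⟩ := (hrd c hc).2 e
    simp only at hb
    refine ⟨b, ?_, hb⟩
    have h := flex hla hra c b
    rw [hb, hright c] at h
    -- h : c = (c * b) * c
    exact (hrd c hc).1 (a₁ := c * b) (a₂ := e)
      (show (c * b) * c = e * c by rw [hleft c]; exact h.symm)
end

section
/- Let F be a field with more than two elements and A an F-algebra in which 0 is the only element whose square is 0. If every singly generated subalgebra of A is at most one-dimensional, then A is one-dimensional (hence isomorphic to F). -/
/-- Over a field `F` with more than two elements, if `0` is the only element of
the algebra `A` whose square is `0` and every singly generated subalgebra is at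
most one-dimensional (i.e. `a² = λ_a a` for each nonzero `a`), then `A` is
one-dimensional. -/
theorem oneDimensional_of_sq_scalar
    {F A : Type*} [Field F] [NonUnitalNonAssocRing A] [Nontrivial A]
    [Module F A] [SMulCommClass F A A] [IsScalarTower F A A]
    (hF : ∃ x : F, x ≠ 0 ∧ x ≠ 1)
    (hsq : ∀ a : A, a * a = 0 → a = 0)
    (hdim : ∀ a : A, a ≠ 0 → ∃ l : F, a * a = l • a) :
    Module.rank F A = 1 := by
  haveI : NoZeroSMulDivisors F A := by
    constructor
    intro c x h
    by_cases hc : c = 0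
    · exact Or.inl hc
    · refine Or.inr ?_
      have : c⁻¹ • (c • x) = 0 := by rw [h, smul_zero]
      rwa [smul_smul, inv_mul_cancel₀ hc, one_smul] at this
  obtain ⟨x, hx0, hx1⟩ := hF
  obtain ⟨a, ha⟩ := exists_ne (0 : A)
  have key : ∀ b : A, ∃ c : F, c • a = b := by
    intro b
    by_cases hb : b = 0
    · exact ⟨0, by simp [hb]⟩
    by_contra hno
    push_neg at hno
    obtain ⟨l, hl⟩ := hdim a ha
    obtain ⟨m, hm⟩ := hdim b hb
    have hl0 : l ≠ 0 := by
      rintro rfl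
      exact ha (hsq a (by simpa using hl))
    have hm0 : m ≠ 0 := by
      rintro rfl
      exact hb (hsq b (by simpa using hm))
    -- a multiple-of-`a` extractor
    have hmul : ∀ α β : F, β ≠ 0 → α • a + β • b = 0 → False := by
      intro α β hβ h
      apply hno (-(β⁻¹ * α))
      have h1 : β • b = -(α • a) := by
        rw [eq_neg_iff_add_eq_zero, add_comm]; exact h
      have h2 : β⁻¹ • (β • b) = β⁻¹ • -(α • a) := by rw [h1]
      rw [smul_smul, inv_mul_cancel₀ hβ, one_smul, smul_neg, smul_smul] at h2
      rw [neg_smul, ← h2]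
    -- `a` and `b` are linearly independent
    have hind : ∀ α β : F, α • a + β • b = 0 → α = 0 ∧ β = 0 := by
      intro α β h
      by_cases hβ : β = 0
      · subst hβ
        rw [zero_smul, add_zero] at h
        rcases smul_eq_zero.mp h with h | h
        · exact ⟨h, rfl⟩
        · exact absurd h ha
      · exact absurd (hmul α β hβ h) not_false
    -- a + b and a + x • b are nonzero
    have hab : a + b ≠ 0 := fun h =>
      hmul 1 1 one_ne_zero (by simpa using h)
    have haxb : a + x • b ≠ 0 := fun h =>
      hmul 1 x hx0 (by simpa using h)
    obtain ⟨p, hp⟩ := hdim _ hab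
    obtain ⟨q, hq⟩ := hdim _ haxb
    set c : A := a * b + b * a with hcdef
    have hc1 : c = (p - l) • a + (p - m) • b := by
      have expand : (a + b) * (a + b) = l • a + c + m • b := by
        rw [hcdef, ← hl, ← hm]; noncomm_ring
      rw [expand] at hp
      have : c = p • (a + b) - l • a - m • b := by
        rw [← hp]; abel
      rw [this, smul_add]
      module
    have hc2 : x • c = (q - l) • a + (q * x - x * x * m) • b := by
      have expand : (a + x • b) * (a + x • b)
          = l • a + x • c + (x * x * m) • b := by
        rw [hcdef, ← hl]
        rw [mul_add, add_mul, add_mul, mul_smul_comm, smul_mul_assoc,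
          smul_mul_assoc, mul_smul_comm, hm]
        module
      rw [expand] at hq
      have : x • c = q • (a + x • b) - l • a - (x * x * m) • b := by
        rw [← hq]; abel
      rw [this]; module
    -- compare the two expressions for x • c
    have hcomp : (x * (p - l) - (q - l)) • a
        + (x * (p - m) - (q * x - x * x * m)) • b = 0 := by
      have h1 : x • c = (x * (p - l)) • a + (x * (p - m)) • b := by
        rw [hc1]; module
      rw [h1] at hc2
      have := sub_eq_zero.mpr hc2
      rw [← this]; module
    obtain ⟨e1, e2⟩ := hind _ _ hcomp
    have hpe : p = l + m := by
      have key2 : x * (x - 1) * p = x * (x - 1) * (l + m) := by linear_combination x * e1 - e2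
      exact mul_left_cancel₀ (mul_ne_zero hx0 (sub_ne_zero.mpr hx1)) key2
    have hc : c = m • a + l • b := by
      rw [hc1, hpe]
      module
    -- the element m • a - l • b squares to zero
    have hd : (m • a - l • b) * (m • a - l • b) = 0 := by
      have expand : (m • a - l • b) * (m • a - l • b)
          = (m * m) • (a * a) - (m * l) • c + (l * l) • (b * b) := by
        rw [hcdef]
        simp only [sub_mul, mul_sub, smul_mul_assoc, mul_smul_comm]
        module
      rw [expand, hl, hm, hc]
      module
    have hd0 : m • a - l • b = 0 := hsq _ hd
    exact hmul m (-l) (neg_ne_zero.mpr hl0) (by rw [neg_smul, ← sub_eq_add_neg]; exact hd0)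
  exact rank_eq_one a ha key
end

section
/- Let A be an algebraic algebra over an algebraically closed field F with no nontrivial left zero-divisors. Then A is one-dimensional, hence isomorphic to F. -/
/-!
Inside the finite-dimensional subalgebra generated by `a ≠ 0`, left multiplication by `a` is
injective, hence invertible, and an eigenvector of `L_a⁻¹ L_{a²}` shows that `a² - c a` is a left
zero-divisor for some `c`; so `a² = c a`. Rescaling, every nonzero element is a multiple of an
idempotent. For two linearly independent idempotents `u`, `v`, comparing coefficients in
`(u + t v)² ∈ F (u + t v)` for `t = 1` and one `t ∉ {0, 1}` forces `u v + v u = u + v`, and then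
`(u - v)² = 0`, which is impossible without zero-divisors.
-/

theorem LinearMap.exists_ne_zero_apply_eq_smul_apply_of_injective {K V : Type*} [Field K]
    [IsAlgClosed K] [AddCommGroup V] [Module K V] [FiniteDimensional K V] [Nontrivial V]
    (f g : V →ₗ[K] V) (hf : Function.Injective f) :
    ∃ (c : K) (v : V), v ≠ 0 ∧ g v = c • f v := by
  let e := LinearEquiv.ofInjectiveEndo f hf
  obtain ⟨c, hc⟩ := Module.End.exists_eigenvalue (e.symm.toLinearMap ∘ₗ g)
  obtain ⟨v, hv⟩ := hc.exists_hasEigenvector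
  refine ⟨c, v, hv.2, ?_⟩
  have hev : e.symm (g v) = c • v := hv.apply_eq_smul
  rw [← e.apply_symm_apply (g v), hev, map_smul]
  rfl

section QuadraticAlgebra

variable {F A : Type*} [Field F] [NonUnitalNonAssocRing A] [Module F A]
  [SMulCommClass F A A] [IsScalarTower F A A]

theorem exists_mul_self_eq_smul [IsAlgClosed F] {a : A}
    (ha : FiniteDimensional F (NonUnitalAlgebra.adjoin F {a}))
    (hlzd : ∀ x y : A, x ≠ 0 → x * y = 0 → y = 0) :
    ∃ c : F, a * a = c • a := by
  rcases eq_or_ne a 0 with rfl | ha0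
  · exact ⟨0, by rw [mul_zero, zero_smul]⟩
  let x : NonUnitalAlgebra.adjoin F {a} := ⟨a, NonUnitalAlgebra.self_mem_adjoin_singleton F a⟩
  have hx : x ≠ 0 := fun h => ha0 (congrArg Subtype.val h)
  have : Nontrivial (NonUnitalAlgebra.adjoin F {a}) := nontrivial_of_ne x 0 hx
  have hinj : Function.Injective (LinearMap.mulLeft F x) := by
    refine (injective_iff_map_eq_zero _).mpr fun y hy => Subtype.ext ?_
    exact hlzd a y ha0 (congrArg Subtype.val hy)
  obtain ⟨c, v, hv, hcv⟩ :=
    (LinearMap.mulLeft F x).exists_ne_zero_apply_eq_smul_apply_of_injective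
      (LinearMap.mulLeft F (x * x)) hinj
  refine ⟨c, sub_eq_zero.mp (by_contra fun h => hv (Subtype.ext ?_))⟩
  refine hlzd _ _ h ?_
  have hcv' : a * a * (v : A) = c • (a * v) := congrArg Subtype.val hcv
  rw [sub_mul, smul_mul_assoc, hcv', sub_self]

theorem exists_smul_isIdempotentElem (hsq : ∀ x : A, ∃ c : F, x * x = c • x)
    (hred : ∀ x : A, x * x = 0 → x = 0) {x : A} (hx : x ≠ 0) :
    ∃ c : F, c ≠ 0 ∧ IsIdempotentElem (c • x) := by
  obtain ⟨c, hc⟩ := hsq x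
  have hc0 : c ≠ 0 := by
    rintro rfl
    exact hx (hred x (by rw [hc, zero_smul]))
  refine ⟨c⁻¹, inv_ne_zero hc0, ?_⟩
  rw [IsIdempotentElem, smul_mul_smul_comm, hc, smul_smul, mul_assoc, inv_mul_cancel₀ hc0, mul_one]

theorem not_linearIndependent_of_isIdempotentElem [Infinite F]
    (hsq : ∀ x : A, ∃ c : F, x * x = c • x) (hred : ∀ x : A, x * x = 0 → x = 0)
    {u v : A} (hu : IsIdempotentElem u) (hv : IsIdempotentElem v) :
    ¬ LinearIndependent F ![u, v] := by
  classical
  intro hind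
  rw [LinearIndependent.pair_iff] at hind
  have hexp : ∀ t : F, (u + t • v) * (u + t • v) = u + t • (u * v + v * u) + (t * t) • v := by
    intro t
    simp only [mul_add, add_mul, smul_mul_assoc, mul_smul_comm, hu.eq, hv.eq]
    module
  obtain ⟨k, hsum⟩ : ∃ k : F, u * v + v * u = k • (u + v) := by
    obtain ⟨δ₁, hδ₁⟩ := hsq (u + (1 : F) • v)
    exact ⟨δ₁ - 1, by linear_combination (norm := module) hδ₁ - hexp 1⟩
  obtain ⟨t, ht⟩ := Infinite.exists_notMem_finset ({0, 1} : Finset F)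
  simp only [Finset.mem_insert, Finset.mem_singleton, not_or] at ht
  obtain ⟨δ, hδ⟩ := hsq (u + t • v)
  obtain ⟨hu_coeff, hv_coeff⟩ := hind (1 + t * k - δ) (t * k + t * t - δ * t) (by
    linear_combination (norm := module) hδ - hexp t - t • hsum)
  have hk : k = 1 := by
    have : t * (1 - t) * (k - 1) = 0 := by linear_combination hv_coeff - t * hu_coeff
    simpa [ht.1, sub_eq_zero, Ne.symm ht.2] using this
  have huv : u - v = 0 := by
    rw [hk, one_smul] at hsum
    refine hred _ ?_
    rw [mul_sub, sub_mul, sub_mul, hu.eq, hv.eq]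
    linear_combination (norm := module) -hsum
  simpa using hind 1 (-1) (by rw [one_smul, neg_one_smul, ← sub_eq_add_neg, huv])

end QuadraticAlgebra

/-- An algebraic algebra over an algebraically closed field with no nontrivial
left zero-divisors is one-dimensional. -/
theorem algebraic_algClosed_noLeftZeroDivisors_oneDimensional
    {F A : Type*} [Field F] [IsAlgClosed F]
    [NonUnitalNonAssocRing A] [Nontrivial A]
    [Module F A] [SMulCommClass F A A] [IsScalarTower F A A]
    (halg : ∀ a : A, FiniteDimensional F (NonUnitalAlgebra.adjoin F {a}))
    (hlzd : ∀ a b : A, a ≠ 0 → a * b = 0 → b = 0) :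
    Module.rank F A = 1 := by
  have hsq : ∀ x : A, ∃ c : F, x * x = c • x := fun x => exists_mul_self_eq_smul (halg x) hlzd
  have hred : ∀ x : A, x * x = 0 → x = 0 := fun x hx => by_contra fun h => h (hlzd x x h hx)
  obtain ⟨a, ha⟩ := exists_ne (0 : A)
  obtain ⟨α, hα, he⟩ := exists_smul_isIdempotentElem hsq hred ha
  have he0 : α • a ≠ 0 := smul_ne_zero hα ha
  refine rank_eq_one (α • a) he0 fun w => by_contra fun h => ?_
  push Not at h
  have hw : w ≠ 0 := fun hw => h 0 (by rw [zero_smul, hw])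
  obtain ⟨β, hβ, hf⟩ := exists_smul_isIdempotentElem hsq hred hw
  refine not_linearIndependent_of_isIdempotentElem hsq hred he hf
    ((LinearIndependent.pair_iff' he0).mpr fun r hr => h (β⁻¹ * r) ?_)
  rw [mul_smul, hr, inv_smul_smul₀ hβ]
end

section
/- Let A be a quadratic algebra over a field F of characteristic not 2. Then there exists a unique symmetric F-bilinear form ⟨·,·⟩ on A such that a² - 2⟨a,1⟩a + ⟨a,a⟩1 = 0 for all a ∈ A. -/
/-!
Write `K = F ∙ 1`. For `a ∉ K` the elements `1, a` are independent, so the coefficient of `a` in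
`a²` is well defined; half of it is the trace `t(a)`, and on `K` we put `t(c • 1) = c`. The trace
is compatible with scalars and with translation by `K`, so it is additive on every plane
`span {1, a}`; for `1, a, b` independent, additivity follows by comparing coefficients in the
parallelogram identity `(a + b)² + (a - b)² = 2a² + 2b²` modulo `K`. The linear functional `t`
then gives the form `⟨a, b⟩ = 2 t(a) t(b) - (t(ab) + t(ba)) / 2`, with `⟨a, 1⟩ = t(a)` and
`⟨a, a⟩ = 2 t(a)² - t(a²)`. Conversely the identity forces `⟨a, 1⟩` and `⟨a, a⟩` for
every `a`, and a symmetric form is determined by its diagonal.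
-/

open Submodule

section

variable {F A : Type*} [Field F] [NonAssocRing A] [Module F A]

variable (F A) in
def IsQuadratic : Prop :=
  ∀ a : A, ∃ r : F, a * a - r • a ∈ F ∙ (1 : A)

variable (F) in
open Classical in
noncomputable def quadTrace (a : A) : F :=
  if h : a ∈ F ∙ (1 : A) then (mem_span_singleton.1 h).choose
  else (Classical.epsilon fun r : F => a * a - r • a ∈ F ∙ (1 : A)) / 2

theorem quadTrace_smul_one [Nontrivial A] (c : F) : quadTrace F (c • (1 : A)) = c := by
  have h : c • (1 : A) ∈ F ∙ (1 : A) := smul_mem _ c (mem_span_singleton_self 1)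
  rw [quadTrace, dif_pos h]
  exact smul_left_injective F one_ne_zero (mem_span_singleton.1 h).choose_spec

theorem quadTrace_zero [Nontrivial A] : quadTrace F (0 : A) = 0 := by
  simpa using quadTrace_smul_one (A := A) (0 : F)

theorem mul_self_sub_quadTrace_smul_mem [IsScalarTower F A A] (h2 : (2 : F) ≠ 0)
    (hquad : IsQuadratic F A) (a : A) :
    a * a - (2 * quadTrace F a) • a ∈ F ∙ (1 : A) := by
  by_cases ha : a ∈ F ∙ (1 : A)
  · obtain ⟨c, rfl⟩ := mem_span_singleton.1 ha
    refine sub_mem ?_ (smul_mem _ _ ha)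
    rw [smul_mul_assoc, one_mul]
    exact smul_mem _ _ ha
  · rw [quadTrace, dif_neg ha, mul_div_cancel₀ _ h2]
    exact Classical.epsilon_spec (hquad a)

theorem two_mul_quadTrace_eq [IsScalarTower F A A] (h2 : (2 : F) ≠ 0)
    (hquad : IsQuadratic F A) {a : A} (ha : a ∉ F ∙ (1 : A))
    {r : F} (hr : a * a - r • a ∈ F ∙ (1 : A)) : 2 * quadTrace F a = r := by
  by_contra hne
  apply ha
  rw [← smul_mem_iff _ (sub_ne_zero.2 hne)]
  convert sub_mem hr (mul_self_sub_quadTrace_smul_mem h2 hquad a) using 1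
  module

theorem quadTrace_add_smul_one [Nontrivial A] [SMulCommClass F A A] [IsScalarTower F A A]
    (h2 : (2 : F) ≠ 0) (hquad : IsQuadratic F A) (a : A) (c : F) :
    quadTrace F (a + c • (1 : A)) = quadTrace F a + c := by
  by_cases ha : a ∈ F ∙ (1 : A)
  · obtain ⟨d, rfl⟩ := mem_span_singleton.1 ha
    rw [← add_smul, quadTrace_smul_one, quadTrace_smul_one]
  have hac : a + c • (1 : A) ∉ F ∙ (1 : A) := fun h =>
    ha (by simpa using sub_mem h (smul_mem _ c (mem_span_singleton_self 1)))
  refine mul_left_cancel₀ h2 (two_mul_quadTrace_eq h2 hquad hac ?_)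
  convert add_mem (mul_self_sub_quadTrace_smul_mem h2 hquad a)
    (smul_mem _ (-(c ^ 2) - 2 * quadTrace F a * c) (mem_span_singleton_self 1)) using 1
  simp only [add_mul, mul_add, smul_mul_assoc, mul_smul_comm, one_mul, mul_one]
  module

theorem quadTrace_smul [Nontrivial A] [SMulCommClass F A A] [IsScalarTower F A A]
    (h2 : (2 : F) ≠ 0) (hquad : IsQuadratic F A) (c : F) (a : A) :
    quadTrace F (c • a) = c * quadTrace F a := by
  by_cases hc : c = 0
  · rw [hc, zero_smul, zero_mul, quadTrace_zero]
  by_cases ha : a ∈ F ∙ (1 : A)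
  · obtain ⟨d, rfl⟩ := mem_span_singleton.1 ha
    rw [smul_smul, quadTrace_smul_one, quadTrace_smul_one]
  have hca : c • a ∉ F ∙ (1 : A) := by rwa [smul_mem_iff _ hc]
  refine mul_left_cancel₀ h2 (two_mul_quadTrace_eq h2 hquad hca ?_)
  convert smul_mem _ (c * c) (mul_self_sub_quadTrace_smul_mem h2 hquad a) using 1
  simp only [smul_mul_assoc, mul_smul_comm]
  module

theorem eq_zero_of_smul_add_smul_mem_span_one {a b : A} (ha : a ∉ F ∙ (1 : A))
    (hb : b ∉ span F {1, a}) {p q : F} (h : p • a + q • b ∈ F ∙ (1 : A)) :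
    p = 0 ∧ q = 0 := by
  have hq : q = 0 := by
    by_contra hq
    apply hb
    rw [← smul_mem_iff _ hq]
    have h1a : F ∙ (1 : A) ≤ span F {1, a} := span_mono (by simp)
    convert sub_mem (h1a h) (smul_mem _ p (subset_span (by simp) : a ∈ span F {1, a})) using 1
    abel
  refine ⟨?_, hq⟩
  by_contra hp
  rw [hq, zero_smul, add_zero, smul_mem_iff _ hp] at h
  exact ha h

theorem quadTrace_add_of_notMem_span [IsScalarTower F A A] (h2 : (2 : F) ≠ 0)
    (hquad : IsQuadratic F A) {a b : A} (ha : a ∉ F ∙ (1 : A))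
    (hb : b ∉ span F {1, a}) : quadTrace F (a + b) = quadTrace F a + quadTrace F b := by
  have hT := mul_self_sub_quadTrace_smul_mem h2 hquad
  set t := quadTrace F (A := A)
  have hmem : (4 * t a - 2 * t (a + b) - 2 * t (a - b)) • a
      + (4 * t b - 2 * t (a + b) + 2 * t (a - b)) • b ∈ F ∙ (1 : A) := by
    convert sub_mem (add_mem (hT (a + b)) (hT (a - b))) (smul_mem _ (2 : F) (add_mem (hT a) (hT b)))
      using 1
    simp only [add_mul, mul_add, sub_mul, mul_sub]
    module
  obtain ⟨hp, hq⟩ := eq_zero_of_smul_add_smul_mem_span_one ha hb hmem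
  exact mul_left_cancel₀ (mul_ne_zero h2 h2) (by linear_combination -(hp + hq))

theorem quadTrace_add [Nontrivial A] [SMulCommClass F A A] [IsScalarTower F A A]
    (h2 : (2 : F) ≠ 0) (hquad : IsQuadratic F A) (a b : A) :
    quadTrace F (a + b) = quadTrace F a + quadTrace F b := by
  by_cases ha : a ∈ F ∙ (1 : A)
  · obtain ⟨c, rfl⟩ := mem_span_singleton.1 ha
    rw [add_comm, quadTrace_add_smul_one h2 hquad, quadTrace_smul_one, add_comm]
  by_cases hb : b ∈ span F {1, a}
  · obtain ⟨α, β, rfl⟩ := mem_span_pair.1 hb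
    rw [show a + (α • 1 + β • a) = (1 + β) • a + α • 1 by module, add_comm (α • 1),
      quadTrace_add_smul_one h2 hquad, quadTrace_add_smul_one h2 hquad, quadTrace_smul h2 hquad,
      quadTrace_smul h2 hquad]
    ring
  exact quadTrace_add_of_notMem_span h2 hquad ha hb

theorem exists_linearMap_mul_self_sub_smul_mem [Nontrivial A] [SMulCommClass F A A]
    [IsScalarTower F A A] (h2 : (2 : F) ≠ 0) (hquad : IsQuadratic F A) :
    ∃ t : A →ₗ[F] F, t 1 = 1 ∧ ∀ a : A, a * a - (2 * t a) • a ∈ F ∙ (1 : A) :=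
  ⟨{ toFun := quadTrace F
     map_add' := quadTrace_add h2 hquad
     map_smul' := quadTrace_smul h2 hquad },
    by simpa using quadTrace_smul_one (A := A) (1 : F), mul_self_sub_quadTrace_smul_mem h2 hquad⟩

noncomputable def traceForm [SMulCommClass F A A] [IsScalarTower F A A] (t : A →ₗ[F] F) :
    A →ₗ[F] A →ₗ[F] F :=
  LinearMap.mk₂ F (fun a b => 2 * t a * t b - (t (a * b) + t (b * a)) / 2)
    (fun a a' b => by simp only [add_mul, mul_add, map_add]; ring)
    (fun c a b => by simp only [smul_mul_assoc, mul_smul_comm, map_smul, smul_eq_mul]; ring)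
    (fun a b b' => by simp only [add_mul, mul_add, map_add]; ring)
    (fun c a b => by simp only [smul_mul_assoc, mul_smul_comm, map_smul, smul_eq_mul]; ring)

theorem traceForm_comm [SMulCommClass F A A] [IsScalarTower F A A] (t : A →ₗ[F] F) (a b : A) :
    traceForm t a b = traceForm t b a := by
  simp only [traceForm, LinearMap.mk₂_apply]
  ring

theorem mul_self_sub_traceForm_smul_add_eq_zero [SMulCommClass F A A] [IsScalarTower F A A]
    (h2 : (2 : F) ≠ 0) {t : A →ₗ[F] F} (ht1 : t 1 = 1) {a : A}
    (ha : a * a - (2 * t a) • a ∈ F ∙ (1 : A)) :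
    a * a - (2 * traceForm t a 1) • a + traceForm t a a • (1 : A) = 0 := by
  obtain ⟨c, hc⟩ := mem_span_singleton.1 ha
  have htc : c = t (a * a) - 2 * t a * t a := by simpa [ht1] using congrArg t hc
  have hB1 : traceForm t a 1 = t a := by
    simp only [traceForm, LinearMap.mk₂_apply, mul_one, one_mul, ht1]
    field_simp
    ring
  have hBa : traceForm t a a = -c := by
    simp only [traceForm, LinearMap.mk₂_apply, htc]
    field_simp
    ring
  rw [hB1, hBa, ← hc, neg_smul, add_neg_cancel]

theorem eq_of_mul_self_sub_smul_add_smul_eq_zero [Nontrivial A] (h2 : (2 : F) ≠ 0)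
    {B B' : LinearMap.BilinForm F A} (hB : B.IsSymm) (hB' : B'.IsSymm)
    (hBa : ∀ a : A, a * a - (2 * B a 1) • a + B a a • (1 : A) = 0)
    (hB'a : ∀ a : A, a * a - (2 * B' a 1) • a + B' a a • (1 : A) = 0) : B = B' := by
  have : NeZero (2 : F) := ⟨h2⟩
  set D := B - B'
  have hD : ∀ a : A, (2 * D a 1) • a = D a a • (1 : A) := by
    intro a
    simp only [D, LinearMap.sub_apply]
    linear_combination (norm := module) hB'a a - hBa a
  have hD11 : D 1 1 = 0 := by
    have h := smul_left_injective F (one_ne_zero (α := A)) (hD 1)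
    linear_combination h
  have hD1 : ∀ a : A, D a 1 = 0 := by
    intro a
    by_contra hne
    have ha : a ∈ F ∙ (1 : A) := by
      rw [← smul_mem_iff _ (mul_ne_zero h2 hne), hD a]
      exact smul_mem _ _ (mem_span_singleton_self 1)
    obtain ⟨c, rfl⟩ := mem_span_singleton.1 ha
    simp [hD11] at hne
  have hDdiag : ∀ a : A, D a a = 0 := fun a =>
    smul_left_injective F (one_ne_zero (α := A)) (by simpa [hD1 a] using (hD a).symm)
  exact sub_eq_zero.1 (LinearMap.BilinForm.ext_of_isSymm (hB.sub hB')
    LinearMap.BilinForm.isSymm_zero hDdiag)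

end

/-- A quadratic algebra over a field of characteristic not `2` has a unique
symmetric bilinear form `⟨·,·⟩` with `a² - 2⟨a,1⟩a + ⟨a,a⟩1 = 0` for all `a`. -/
theorem quadratic_exists_unique_bilinear_form
    {F A : Type*} [Field F] [NonAssocRing A] [Nontrivial A]
    [Module F A] [SMulCommClass F A A] [IsScalarTower F A A]
    (h2 : (2 : F) ≠ 0)
    (hquad : ∀ a : A, ∃ r s : F, a * a = r • a + s • (1 : A)) :
    ∃! B : A →ₗ[F] A →ₗ[F] F, (∀ a b : A, B a b = B b a) ∧
      ∀ a : A, a * a - (2 * B a 1) • a + (B a a) • (1 : A) = 0 := by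
  have hquad' : IsQuadratic F A := fun a => by
    obtain ⟨r, s, h⟩ := hquad a
    exact ⟨r, mem_span_singleton.2 ⟨s, by rw [h, add_sub_cancel_left]⟩⟩
  obtain ⟨t, ht1, ht⟩ := exists_linearMap_mul_self_sub_smul_mem h2 hquad'
  refine ⟨traceForm t, ⟨traceForm_comm t,
    fun a => mul_self_sub_traceForm_smul_add_eq_zero h2 ht1 (ht a)⟩, ?_⟩
  rintro B ⟨hBsymm, hB⟩
  exact eq_of_mul_self_sub_smul_add_smul_eq_zero h2 ⟨hBsymm⟩ ⟨traceForm_comm t⟩ hB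
    fun a => mul_self_sub_traceForm_smul_add_eq_zero h2 ht1 (ht a)
end

section
/- A quadratic algebra A over a field F of characteristic not 2 is proper (i.e., ⟨ab,b⟩ = ⟨b,b⟩⟨a,1⟩ for all a, b) if and only if it is flexible (i.e., (ab)a = a(ba) for all a, b). -/
/-- A quadratic algebra over a field of characteristic not `2` is proper
(`⟨ab,b⟩ = ⟨b,b⟩⟨a,1⟩`) iff it is flexible (`(ab)a = a(ba)`). -/
theorem quadratic_proper_iff_flexible
    {F A : Type*} [Field F] [NonAssocRing A] [Nontrivial A]
    [Module F A] [SMulCommClass F A A] [IsScalarTower F A A]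
    (h2 : (2 : F) ≠ 0)
    (hquad : ∀ a : A, ∃ r s : F, a * a = r • a + s • (1 : A))
    (B : A →ₗ[F] A →ₗ[F] F)
    (hsymm : ∀ a b : A, B a b = B b a)
    (hB : ∀ a : A, a * a - (2 * B a 1) • a + (B a a) • (1 : A) = 0) :
    (∀ a b : A, B (a * b) b = B b b * B a 1) ↔
      (∀ a b : A, (a * b) * a = a * (b * a)) := by
  have h1ne : (1 : A) ≠ 0 := one_ne_zero
  have smul_one_inj : ∀ c : F, c • (1 : A) = 0 → c = 0 := by
    intro c h
    by_contra hc
    apply h1ne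
    calc (1 : A) = c⁻¹ • (c • (1 : A)) := by
          rw [smul_smul, inv_mul_cancel₀ hc, one_smul]
      _ = 0 := by rw [h, smul_zero]
  have sq : ∀ a : A, a * a = (2 * B a 1) • a - (B a a) • (1 : A) := by
    intro a
    have h := hB a
    rw [sub_add_eq_add_sub, sub_eq_zero] at h
    exact eq_sub_of_add_eq h
  have lin : ∀ a b : A, a * b + b * a
      = (2 * B b 1) • a + (2 * B a 1) • b - (2 * B a b) • (1 : A) := by
    intro a b
    have h := sq (a + b)
    rw [mul_add, add_mul, add_mul, sq a, sq b] at h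
    simp only [map_add, LinearMap.add_apply] at h
    rw [hsymm b a] at h
    linear_combination (norm := module) h
  have sumBa : ∀ a b : A, B (a * b) a + B (b * a) a = 2 * B b 1 * B a a := by
    intro a b
    have h := congrArg (fun x => B x a) (lin a b)
    simp only [map_add, map_sub, map_smul, LinearMap.add_apply, LinearMap.sub_apply,
      LinearMap.smul_apply, smul_eq_mul] at h
    rw [hsymm 1 a, hsymm b a] at h
    linear_combination h
  have B11 : B 1 1 = 1 := by
    have h := sq 1
    rw [mul_one] at h
    have h0 : (2 * B 1 1 - B 1 1 - 1) • (1 : A) = 0 := by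
      rw [sub_smul, sub_smul, one_smul, ← h]
      abel
    have := smul_one_inj _ h0
    linear_combination this
  constructor
  · -- proper → flexible
    intro hp a b
    have trace : ∀ a b : A, B (a * b) 1 = 2 * B a 1 * B b 1 - B a b := by
      intro a b
      have h := hp a (b + 1)
      rw [mul_add, mul_one] at h
      simp only [map_add, LinearMap.add_apply] at h
      rw [hp a b, B11, hsymm 1 b] at h
      linear_combination h
    have hpa : B (a * b) a = B b 1 * B a a := by
      have h := hp b a
      have h2' := sumBa a b
      linear_combination h2' - h
    have e1 : (a * b) * a = (2 * B a 1) • (a * b) + (2 * B (a * b) 1) • a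
        - (2 * B (a * b) a) • (1 : A) - a * (a * b) :=
      eq_sub_of_add_eq (lin (a * b) a)
    have e2 : b * a = (2 * B a 1) • b + (2 * B b 1) • a
        - (2 * B b a) • (1 : A) - a * b :=
      eq_sub_of_add_eq (lin b a)
    rw [e1, e2]
    simp only [mul_sub, mul_add, mul_smul_comm, mul_one]
    rw [sq a, trace a b, hpa, hsymm b a]
    module
  · -- flexible → proper
    intro hf a b
    have ident : (b * a) * b - b * (a * b)
        = (2 * B (b * a) 1 - 4 * B a 1 * B b 1 + 2 * B a b) • b
          + (2 * B a 1 * B b b - 2 * B (b * a) b) • (1 : A) := by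
      have e1 : (b * a) * b = (2 * B b 1) • (b * a) + (2 * B (b * a) 1) • b
          - (2 * B (b * a) b) • (1 : A) - b * (b * a) :=
        eq_sub_of_add_eq (lin (b * a) b)
      have e2 : a * b = (2 * B b 1) • a + (2 * B a 1) • b
          - (2 * B a b) • (1 : A) - b * a :=
        eq_sub_of_add_eq (lin a b)
      rw [e1, e2]
      simp only [mul_sub, mul_add, mul_smul_comm, mul_one]
      rw [sq b]
      module
    set p := 2 * B (b * a) 1 - 4 * B a 1 * B b 1 + 2 * B a b with hp
    set q := 2 * B a 1 * B b b - 2 * B (b * a) b with hq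
    have key : p • b + q • (1 : A) = 0 := by
      rw [← ident, hf b a, sub_self]
    by_cases hc : p = 0
    · rw [hc, zero_smul, zero_add] at key
      have hq0 : q = 0 := smul_one_inj _ key
      have hba : B (b * a) b = B a 1 * B b b := by
        rw [hq] at hq0
        have h22 : (2 : F) * (B a 1 * B b b) = 2 * B (b * a) b := by
          linear_combination hq0
        exact (mul_left_cancel₀ h2 h22).symm
      have hs := sumBa b a
      linear_combination hs - hba
    · have hpb : p • b = (-q) • (1 : A) := by
        rw [neg_smul]
        exact eq_neg_of_add_eq_zero_left key
      have hb : b = (p⁻¹ * -q) • (1 : A) := by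
        calc b = (p⁻¹ * p) • b := by rw [inv_mul_cancel₀ hc, one_smul]
          _ = p⁻¹ • (p • b) := mul_smul _ _ _
          _ = p⁻¹ • ((-q) • (1 : A)) := by rw [hpb]
          _ = (p⁻¹ * -q) • (1 : A) := (mul_smul _ _ _).symm
      rw [hb]
      simp only [mul_smul_comm, mul_one, map_smul, LinearMap.smul_apply, smul_eq_mul, B11]
      ring
end

section
/- A quadratic algebra A over a field F of characteristic not 2 is left alternative if and only if it is right alternative, if and only if it is alternative. -/
/-!
Since `2 ≠ 0`, the trace of a quadratic algebra `A` (the `r` in `a * a = r • a + s • 1`) is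
linear, and `A = F • 1 ⊕ V` with `V` its kernel. On `V` the product reads
`v w = B v w • 1 + C v w` with `B` bilinear and `C` alternating. The left alternative law on `V`
says `B v (C v w) = 0` and `C v (C v w) = B v v • w - B v w • v`; linearising these identities
forces `B` to be symmetric, which is exactly what the right alternative law on `V`, hence on `A`,
needs. The converse is the same implication for the opposite algebra.
-/

open Submodule

theorem Submodule.eq_of_smul_add_eq_of_notMem {F M : Type*} [Field F] [AddCommGroup M]
    [Module F M] {p : Submodule F M} {a x x' : M} (ha : a ∉ p) (hx : x ∈ p) (hx' : x' ∈ p)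
    {r r' : F} (h : r • a + x = r' • a + x') : r = r' := by
  by_contra hne
  refine ha ((p.smul_mem_iff (sub_ne_zero.mpr hne)).mp ?_)
  rw [show (r - r') • a = x' - x by rw [sub_smul]; linear_combination (norm := module) h]
  exact sub_mem hx' hx

theorem mul_mul_self_smul_one_add {F A : Type*} [Field F] [NonAssocRing A] [Module F A]
    [SMulCommClass F A A] [IsScalarTower F A A] {x y : A} (h : x * y * y = x * (y * y))
    (c d : F) :
    (c • 1 + x) * (d • 1 + y) * (d • 1 + y) = (c • 1 + x) * ((d • 1 + y) * (d • 1 + y)) := by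
  simp only [add_mul, mul_add, smul_mul_assoc, mul_smul_comm, mul_one, one_mul]
  linear_combination (norm := module) h

section FormCross

/- A vector space `V` with a bilinear form `B` and an alternating bilinear product `C` subject to
`hBC` and `hCC` is the trace-zero part of a left alternative quadratic algebra `F ⊕ V` with product
`v w = B v w • 1 + C v w`. -/

variable {F V : Type*} [Field F] [AddCommGroup V] [Module F V]
  {B : V →ₗ[F] V →ₗ[F] F} {C : V →ₗ[F] V →ₗ[F] V}

theorem cross_swap (hC : ∀ v, C v v = 0) (v w : V) : C w v = -C v w := by
  have h := hC (v + w)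
  simp only [map_add, LinearMap.add_apply, hC, zero_add, add_zero] at h
  linear_combination (norm := module) h

theorem cross_cross_add_cross_cross (hCC : ∀ v w, C v (C v w) = B v v • w - B v w • v)
    (u v w : V) :
    C u (C v w) + C v (C u w) = (B u v + B v u) • w - B v w • u - B u w • v := by
  have h := hCC (u + v) w
  simp only [map_add, LinearMap.add_apply, hCC] at h
  linear_combination (norm := module) h

theorem smul_cross_eq (hC : ∀ v, C v v = 0) (hBC : ∀ v w, B v (C v w) = 0)
    (hCC : ∀ v w, C v (C v w) = B v v • w - B v w • v) (v w : V) :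
    (B v w - B w v) • C v w = B (C v w) v • w - B (C v w) w • v := by
  have h := cross_cross_add_cross_cross hCC (C v w) v w
  have hw : C (C v w) w = B w w • v - B w v • w := by
    rw [cross_swap hC w (C v w), cross_swap hC w v, map_neg, neg_neg, hCC]
  rw [hC, zero_add, hw, map_sub, map_smul, map_smul, hC, smul_zero, zero_sub, hBC] at h
  linear_combination (norm := module) h

theorem form_eq_zero_of_ne [NeZero (2 : F)] (hC : ∀ v, C v v = 0) (hBC : ∀ v w, B v (C v w) = 0)
    (hCC : ∀ v w, C v (C v w) = B v v • w - B v w • v) {v w : V} (h : B v w ≠ B w v) :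
    B v w = 0 := by
  have hne : B v w - B w v ≠ 0 := sub_ne_zero.mpr h
  have key := smul_cross_eq hC hBC hCC v w
  have hr := congrArg (B v) key
  have hl := congrArg (B · v) key
  simp only [map_sub, map_smul, LinearMap.sub_apply, LinearMap.smul_apply, smul_eq_mul, hBC]
    at hr hl
  have hzv : B (C v w) v = 0 := by
    have : (B v w - B w v) * B (C v w) v * 2 = 0 := by linear_combination hl - hr
    simpa [hne, two_ne_zero] using this
  have hz : (B v w - B w v) • C v w = -B (C v w) w • v := by
    rw [key, hzv, zero_smul, zero_sub, neg_smul]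
  have hvz : C v (C v w) = 0 := by
    have h' := congrArg (C v) hz
    rw [map_smul, map_smul, hC, smul_zero] at h'
    exact (smul_eq_zero.mp h').resolve_left hne
  rw [hCC, sub_eq_zero] at hvz
  have hvv : B v v = 0 := by
    have h' := congrArg (B · v) hvz
    simp only [map_smul, LinearMap.smul_apply, smul_eq_mul] at h'
    have : B v v * (B v w - B w v) = 0 := by linear_combination -h'
    exact (mul_eq_zero.mp this).resolve_right hne
  rw [hvv, zero_smul, eq_comm, smul_eq_zero] at hvz
  rcases hvz with hvw | rfl
  · exact hvw
  · rw [map_zero, LinearMap.zero_apply]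

theorem form_comm [NeZero (2 : F)] (hC : ∀ v, C v v = 0) (hBC : ∀ v w, B v (C v w) = 0)
    (hCC : ∀ v w, C v (C v w) = B v v • w - B v w • v) (v w : V) : B v w = B w v := by
  by_contra h
  exact h <| by rw [form_eq_zero_of_ne hC hBC hCC h, form_eq_zero_of_ne hC hBC hCC (Ne.symm h)]

end FormCross

def IsQuadraticAlgebra (F A : Type*) [Field F] [NonAssocRing A] [Module F A] : Prop :=
  ∀ a : A, ∃ r s : F, a * a = r • a + s • (1 : A)

namespace IsQuadraticAlgebra

variable {F A : Type*} [Field F] [NonAssocRing A] [Module F A] (hq : IsQuadraticAlgebra F A)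

include hq in
theorem op : IsQuadraticAlgebra F Aᵐᵒᵖ := fun a => by
  obtain ⟨r, s, h⟩ := hq a.unop
  exact ⟨r, s, MulOpposite.unop_injective (by simpa using h)⟩

variable [Nontrivial A]

open Classical in
/-- Off `F ∙ 1` the coefficient `r` in `a * a = r • a + s • 1` is unique; on `F ∙ 1` the value
`trace (c • 1) = 2 * c` is the one that makes the trace linear. -/
noncomputable def trace (a : A) : F :=
  if h : a ∈ F ∙ (1 : A) then 2 * (mem_span_singleton.mp h).choose else (hq a).choose

theorem trace_smul_one (c : F) : hq.trace (c • (1 : A)) = 2 * c := by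
  have h : c • (1 : A) ∈ F ∙ (1 : A) := mem_span_singleton.mpr ⟨c, rfl⟩
  rw [trace, dif_pos h, smul_left_injective F one_ne_zero (mem_span_singleton.mp h).choose_spec]

variable [SMulCommClass F A A] [IsScalarTower F A A]

theorem exists_mul_self_eq (a : A) : ∃ s : F, a * a = hq.trace a • a + s • (1 : A) := by
  by_cases ha : a ∈ F ∙ (1 : A)
  · obtain ⟨c, rfl⟩ := mem_span_singleton.mp ha
    refine ⟨-(c * c), ?_⟩
    rw [trace_smul_one, smul_mul_smul_comm, mul_one]
    module
  · rw [trace, dif_neg ha]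
    exact (hq a).choose_spec

theorem trace_eq_of_notMem {a : A} (ha : a ∉ F ∙ (1 : A)) {r s : F}
    (h : a * a = r • a + s • (1 : A)) : hq.trace a = r := by
  obtain ⟨s', hs'⟩ := hq.exists_mul_self_eq a
  exact eq_of_smul_add_eq_of_notMem ha (smul_mem _ _ (mem_span_singleton_self 1))
    (smul_mem _ _ (mem_span_singleton_self 1)) (hs'.symm.trans h)

theorem trace_smul_add_smul_one (c d : F) (a : A) :
    hq.trace (c • a + d • (1 : A)) = c * hq.trace a + 2 * d := by
  by_cases ha : a ∈ F ∙ (1 : A)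
  · obtain ⟨e, rfl⟩ := mem_span_singleton.mp ha
    rw [smul_smul, ← add_smul, trace_smul_one, trace_smul_one]
    ring
  rcases eq_or_ne c 0 with rfl | hc
  · rw [zero_smul, zero_add, trace_smul_one, zero_mul, zero_add]
  have hx : c • a + d • (1 : A) ∉ F ∙ (1 : A) := fun hx => ha <| by
    refine ((F ∙ (1 : A)).smul_mem_iff hc).mp ?_
    rw [← add_sub_cancel_right (c • a) (d • (1 : A))]
    exact sub_mem hx (smul_mem _ _ (mem_span_singleton_self 1))
  obtain ⟨s, hs⟩ := hq.exists_mul_self_eq a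
  refine hq.trace_eq_of_notMem hx (s := c * c * s - c * d * hq.trace a - d * d) ?_
  simp only [add_mul, mul_add, smul_mul_smul_comm, mul_one, one_mul, hs]
  module

theorem trace_smul (c : F) (a : A) : hq.trace (c • a) = c * hq.trace a := by
  simpa using hq.trace_smul_add_smul_one c 0 a

theorem trace_add [NeZero (2 : F)] (a b : A) : hq.trace (a + b) = hq.trace a + hq.trace b := by
  by_cases ha : a ∈ F ∙ (1 : A)
  · obtain ⟨e, rfl⟩ := mem_span_singleton.mp ha
    simpa [trace_smul_one, add_comm] using hq.trace_smul_add_smul_one 1 e b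
  by_cases hb : b ∈ span F {1, a}
  · obtain ⟨d, c, rfl⟩ := mem_span_pair.mp hb
    rw [show a + (d • 1 + c • a) = (1 + c) • a + d • (1 : A) by module, add_comm (d • 1),
      trace_smul_add_smul_one, trace_smul_add_smul_one]
    ring
  -- compare the coefficients of `b` and `a` in `(a + b)² + (a - b)² = 2 a² + 2 b²`
  obtain ⟨s₁, h₁⟩ := hq.exists_mul_self_eq (a + b)
  obtain ⟨s₂, h₂⟩ := hq.exists_mul_self_eq (a - b)
  obtain ⟨sa, ha'⟩ := hq.exists_mul_self_eq a
  obtain ⟨sb, hb'⟩ := hq.exists_mul_self_eq b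
  have hsum : (a + b) * (a + b) + (a - b) * (a - b) = (2 : F) • (a * a) + (2 : F) • (b * b) := by
    simp only [add_mul, mul_add, sub_mul, mul_sub]
    module
  rw [h₁, h₂, ha', hb'] at hsum
  have one_mem : (1 : A) ∈ span F {1, a} := subset_span (by simp)
  have a_mem : a ∈ span F {1, a} := subset_span (by simp)
  have hcb := eq_of_smul_add_eq_of_notMem hb
    (add_mem (smul_mem _ (hq.trace (a + b) + hq.trace (a - b) - 2 * hq.trace a) a_mem)
      (smul_mem _ (s₁ + s₂ - 2 * sa - 2 * sb) one_mem)) (zero_mem _)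
    (r' := 0) (r := hq.trace (a + b) - hq.trace (a - b) - 2 * hq.trace b)
    (by rw [add_zero, zero_smul]; linear_combination (norm := module) hsum)
  have hca := eq_of_smul_add_eq_of_notMem ha
    (smul_mem _ (s₁ + s₂ - 2 * sa - 2 * sb) (mem_span_singleton_self 1)) (zero_mem _)
    (r' := 0) (r := hq.trace (a + b) + hq.trace (a - b) - 2 * hq.trace a)
    (by rw [add_zero, zero_smul]; linear_combination (norm := module) hsum - hcb • b)
  exact mul_left_cancel₀ two_ne_zero (by linear_combination hca + hcb)

variable [NeZero (2 : F)]

noncomputable def re : A →ₗ[F] F where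
  toFun a := hq.trace a / 2
  map_add' a b := by rw [trace_add, add_div]
  map_smul' c a := by rw [trace_smul, smul_eq_mul, RingHom.id_apply, mul_div_assoc]

theorem re_smul_one (c : F) : hq.re (c • (1 : A)) = c := by
  change hq.trace (c • (1 : A)) / 2 = c
  rw [trace_smul_one, mul_div_cancel_left₀ c two_ne_zero]

@[simp] theorem re_one : hq.re (1 : A) = 1 := by simpa using hq.re_smul_one 1

noncomputable def pure : Submodule F A := LinearMap.ker hq.re

noncomputable def im : A →ₗ[F] hq.pure :=
  LinearMap.codRestrict hq.pure (LinearMap.id - hq.re.smulRight 1) fun a => by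
    simp [pure]

theorem coe_im (a : A) : (hq.im a : A) = a - hq.re a • (1 : A) := rfl

theorem re_smul_one_add_im (a : A) : hq.re a • (1 : A) + hq.im a = a := by
  rw [coe_im, add_sub_cancel]

@[simp] theorem re_coe (v : hq.pure) : hq.re (v : A) = 0 := v.2

@[simp] theorem im_coe (v : hq.pure) : hq.im (v : A) = v := by
  ext; rw [coe_im, re_coe, zero_smul, sub_zero]

@[simp] theorem im_one : hq.im (1 : A) = 0 := by
  ext; rw [coe_im, re_one, one_smul, sub_self, ZeroMemClass.coe_zero]

noncomputable def form : hq.pure →ₗ[F] hq.pure →ₗ[F] F :=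
  ((LinearMap.mul F A).compl₁₂ hq.pure.subtype hq.pure.subtype).compr₂ hq.re

noncomputable def cross : hq.pure →ₗ[F] hq.pure →ₗ[F] hq.pure :=
  ((LinearMap.mul F A).compl₁₂ hq.pure.subtype hq.pure.subtype).compr₂ hq.im

theorem coe_mul_coe (v w : hq.pure) : (v : A) * w = hq.form v w • (1 : A) + hq.cross v w :=
  (hq.re_smul_one_add_im _).symm

theorem cross_self (v : hq.pure) : hq.cross v v = 0 := by
  obtain ⟨s, hs⟩ := hq.exists_mul_self_eq (v : A)
  have htr : hq.trace (v : A) = 0 :=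
    (div_eq_zero_iff.mp (hq.re_coe v)).resolve_right two_ne_zero
  rw [htr, zero_smul, zero_add] at hs
  change hq.im ((v : A) * v) = 0
  rw [hs, map_smul, im_one, smul_zero]

theorem smul_one_add_coe_eq_of_leftAlt (hL : ∀ a b : A, a * (a * b) = a * a * b)
    (v w : hq.pure) :
    hq.form v (hq.cross v w) • (1 : A) + (hq.form v w • v + hq.cross v (hq.cross v w) : hq.pure)
      = hq.form v v • (w : A) := by
  have h := hL v w
  rw [coe_mul_coe, coe_mul_coe, cross_self, mul_add, mul_smul_comm, mul_one, coe_mul_coe,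
    ZeroMemClass.coe_zero, add_zero, smul_mul_assoc, one_mul] at h
  rw [← h, Submodule.coe_add, Submodule.coe_smul]
  abel

theorem form_cross_self_of_leftAlt (hL : ∀ a b : A, a * (a * b) = a * a * b) (v w : hq.pure) :
    hq.form v (hq.cross v w) = 0 := by
  simpa using congrArg hq.re (hq.smul_one_add_coe_eq_of_leftAlt hL v w)

theorem cross_cross_self_of_leftAlt (hL : ∀ a b : A, a * (a * b) = a * a * b) (v w : hq.pure) :
    hq.cross v (hq.cross v w) = hq.form v v • w - hq.form v w • v := by
  have h := congrArg hq.im (hq.smul_one_add_coe_eq_of_leftAlt hL v w)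
  simp only [map_add, map_smul, im_one, im_coe, smul_zero, zero_add] at h
  rw [← h, add_sub_cancel_left]

theorem rightAlt_pure_of_leftAlt (hL : ∀ a b : A, a * (a * b) = a * a * b) (v w : hq.pure) :
    (w : A) * v * v = w * (v * v) := by
  have hC := hq.cross_self
  have hBC := hq.form_cross_self_of_leftAlt hL
  have hCC := hq.cross_cross_self_of_leftAlt hL
  have hB := form_comm hC hBC hCC
  have hCC' : hq.cross (hq.cross w v) v = hq.form v v • w - hq.form v w • v := by
    rw [cross_swap hC v w, map_neg, LinearMap.neg_apply, ← cross_swap hC, hCC]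
  have hBC' : hq.form (hq.cross w v) v = 0 := by
    rw [hB, ← neg_neg (hq.cross w v), ← cross_swap hC, map_neg, hBC, neg_zero]
  rw [hq.coe_mul_coe w v, hq.coe_mul_coe v v, hC, ZeroMemClass.coe_zero, add_zero, add_mul,
    smul_mul_assoc, one_mul, hq.coe_mul_coe, hCC', hBC', mul_smul_comm, mul_one, hB w v]
  push_cast
  module

include hq in
theorem rightAlt_of_leftAlt (hL : ∀ a b : A, a * (a * b) = a * a * b) (a b : A) :
    a * b * b = a * (b * b) := by
  rw [← hq.re_smul_one_add_im a, ← hq.re_smul_one_add_im b]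
  exact mul_mul_self_smul_one_add (hq.rightAlt_pure_of_leftAlt hL _ _) _ _

include hq in
theorem leftAlt_of_rightAlt (hR : ∀ a b : A, a * b * b = a * (b * b)) (a b : A) :
    a * (a * b) = a * a * b :=
  congrArg MulOpposite.unop <| hq.op.rightAlt_of_leftAlt
    (fun x y => congrArg MulOpposite.op (hR y.unop x.unop)) (.op b) (.op a)

end IsQuadraticAlgebra

/-- A quadratic algebra over a field of characteristic not `2` is left
alternative iff it is right alternative, iff it is alternative. -/
theorem quadratic_leftAlt_iff_rightAlt_iff_alt
    {F A : Type*} [Field F] [NonAssocRing A] [Nontrivial A]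
    [Module F A] [SMulCommClass F A A] [IsScalarTower F A A]
    (h2 : (2 : F) ≠ 0)
    (hquad : ∀ a : A, ∃ r s : F, a * a = r • a + s • (1 : A)) :
    ((∀ a b : A, a * (a * b) = (a * a) * b) ↔
      (∀ a b : A, (a * b) * b = a * (b * b))) ∧
    ((∀ a b : A, a * (a * b) = (a * a) * b) ↔
      ((∀ a b : A, a * (a * b) = (a * a) * b) ∧
       (∀ a b : A, (a * b) * b = a * (b * b)))) := by
  have : NeZero (2 : F) := ⟨h2⟩
  have hq : IsQuadraticAlgebra F A := hquad
  exact ⟨⟨hq.rightAlt_of_leftAlt, hq.leftAlt_of_rightAlt⟩,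
    fun hL => ⟨hL, hq.rightAlt_of_leftAlt hL⟩, And.left⟩
end

section
/- Let A be a left alternative quadratic algebra over a field F of characteristic not 2. Then the canonical bilinear form of A permits composition: ⟨ab, ab⟩ = ⟨a,a⟩⟨b,b⟩ for all a, b ∈ A. -/
set_option maxHeartbeats 1000000


/-- The canonical bilinear form of a left alternative quadratic algebra over a
field of characteristic not `2` permits composition: `⟨ab,ab⟩ = ⟨a,a⟩⟨b,b⟩`. -/
theorem quadratic_leftAlternative_form_permits_composition
    {F A : Type*} [Field F] [NonAssocRing A] [Nontrivial A]
    [Module F A] [SMulCommClass F A A] [IsScalarTower F A A]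
    (h2 : (2 : F) ≠ 0)
    (hquad : ∀ a : A, ∃ r s : F, a * a = r • a + s • (1 : A))
    (hla : ∀ a b : A, a * (a * b) = (a * a) * b)
    (B : A →ₗ[F] A →ₗ[F] F)
    (hsymm : ∀ a b : A, B a b = B b a)
    (hB : ∀ a : A, a * a - (2 * B a 1) • a + (B a a) • (1 : A) = 0) :
    ∀ a b : A, B (a * b) (a * b) = B a a * B b b := by
  -- 1 ≠ 0 in A
  have hone : (1 : A) ≠ 0 := by
    intro h
    obtain ⟨p, q, hpq⟩ := exists_pair_ne A
    apply hpq
    have hz : ∀ r : A, r = 0 := fun r => by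
      calc r = r * 1 := (mul_one r).symm
        _ = r * 0 := by rw [h]
        _ = 0 := mul_zero r
    rw [hz p, hz q]
  have hcancel : ∀ r : F, r • (1 : A) = 0 → r = 0 := by
    intro r h
    by_contra hr
    apply hone
    calc (1 : A) = r⁻¹ • (r • (1 : A)) := by
          rw [smul_smul, inv_mul_cancel₀ hr, one_smul]
      _ = 0 := by rw [h, smul_zero]
  have half : ∀ r : F, 2 * r = 0 → r = 0 := by
    intro r h
    rcases mul_eq_zero.mp h with h' | h'
    · exact absurd h' h2
    · exact h'
  have cube : ∀ r : F, r * (r * r) = 0 → r = 0 := by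
    intro r h
    rcases mul_eq_zero.mp h with h' | h'
    · exact h'
    · rcases mul_eq_zero.mp h' with h'' | h'' <;> exact h''
  have b11 : B 1 1 = 1 := by
    have h := hB 1
    rw [one_mul] at h
    have h' : (1 - B 1 1) • (1 : A) = 0 := by
      linear_combination (norm := module) h
    have h'' := hcancel _ h'
    linear_combination -h''
  -- polarization of hB
  have hpol : ∀ x y : A,
      x * y + y * x = (2 * B x 1) • y + (2 * B y 1) • x - (2 * B x y) • (1 : A) := by
    intro x y
    have h := hB (x + y)
    have hx := hB x
    have hy := hB y
    have e1 : (x + y) * (x + y) = x * x + (x * y + y * x) + y * y := by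
      rw [mul_add, add_mul, add_mul]; abel
    have e2 : B (x + y) 1 = B x 1 + B y 1 := by
      simp only [map_add, LinearMap.add_apply]
    have e3 : B (x + y) (x + y) = B x x + (B x y + B x y) + B y y := by
      simp only [map_add, LinearMap.add_apply]
      rw [hsymm y x]; ring
    rw [e1, e2, e3] at h
    linear_combination (norm := module) h - hx - hy
  -- squares of trace-zero elements
  have hq0 : ∀ z : A, B z 1 = 0 → z * z = (-(B z z)) • (1 : A) := by
    intro z hz
    have h := hB z
    rw [hz] at h
    linear_combination (norm := module) h
  -- the key linearized left-alternative law for trace-zero left factors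
  have hK : ∀ x z y : A, B x 1 = 0 → B z 1 = 0 →
      x * (z * y) + z * (x * y) = (-(2 * B x z)) • y := by
    intro x z y hx hz
    have h := hla (x + z) y
    have hxz : x * z + z * x = (-(2 * B x z)) • (1 : A) := by
      have h' := hpol x z
      rw [hx, hz] at h'
      linear_combination (norm := module) h'
    have e1 : (x + z) * ((x + z) * y)
        = x * (x * y) + (x * (z * y) + z * (x * y)) + z * (z * y) := by
      rw [add_mul x z ((x + z) * y), add_mul x z y, mul_add, mul_add]; abel
    have e2 : ((x + z) * (x + z)) * y
        = (x * x) * y + ((-(2 * B x z)) • y) + (z * z) * y := by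
      have e2' : (x + z) * (x + z) = x * x + (-(2 * B x z)) • (1 : A) + z * z := by
        rw [mul_add, add_mul, add_mul]
        linear_combination (norm := module) hxz
      rw [e2', add_mul, add_mul, smul_mul_assoc, one_mul]
    rw [e1, e2] at h
    linear_combination (norm := module) h - hla x y - hla z y
  intro a b
  set α := B a 1 with hα
  set β := B b 1 with hβ
  set v : A := a - α • 1 with hv
  set w : A := b - β • 1 with hw
  have ha : a = α • 1 + v := by rw [hv]; abel
  have hb' : b = β • 1 + w := by rw [hw]; abel
  have bv1 : B v 1 = 0 := by
    rw [hv]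
    simp only [map_sub, LinearMap.sub_apply, map_smul, LinearMap.smul_apply,
      smul_eq_mul, b11, mul_one]
    rw [← hα, sub_self]
  have bw1 : B w 1 = 0 := by
    rw [hw]
    simp only [map_sub, LinearMap.sub_apply, map_smul, LinearMap.smul_apply,
      smul_eq_mul, b11, mul_one]
    rw [← hβ, sub_self]
  set na := B v v with hna
  set nb := B w w with hnb
  set pi := B v w with hpi
  set sg := B (v * w) 1 with hsg
  set sg' := -(2 * pi) - sg with hsg'
  set e : A := v * w - sg • 1 with he
  set g := B e v with hg
  set d := B e w with hd
  set ne' := B e e with hne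
  -- value lemmas
  have b1v : B 1 v = 0 := by rw [hsymm]; exact bv1
  have b1w : B 1 w = 0 := by rw [hsymm]; exact bw1
  have be1 : B e 1 = 0 := by
    rw [he]
    simp only [map_sub, LinearMap.sub_apply, map_smul, LinearMap.smul_apply,
      smul_eq_mul, b11, mul_one]
    rw [← hsg, sub_self]
  have b1e : B 1 e = 0 := by rw [hsymm]; exact be1
  have bvv : B v v = na := hna.symm
  have bww : B w w = nb := hnb.symm
  have bvw : B v w = pi := hpi.symm
  have bwv : B w v = pi := by rw [hsymm]
  have bev : B e v = g := hg.symm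
  have bve : B v e = g := by rw [hsymm]
  have bew : B e w = d := hd.symm
  have bwe : B w e = d := by rw [hsymm]
  have bee : B e e = ne' := hne.symm
  -- multiplication table
  have mvv : v * v = (-na) • (1 : A) := by rw [hna]; exact hq0 v bv1
  have mww : w * w = (-nb) • (1 : A) := by rw [hnb]; exact hq0 w bw1
  have mvw : v * w = e + sg • (1 : A) := by rw [he]; abel
  have mwv : w * v = sg' • (1 : A) - e := by
    have h := hpol v w
    rw [bv1, bw1, bvw] at h
    rw [hsg']
    linear_combination (norm := module) h - mvw
  have mve : v * e = (-na) • w - sg • v := by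
    have h1 : v * (v * w) = (-na) • w := by
      rw [hla v w, mvv, smul_mul_assoc, one_mul]
    rw [he, mul_sub, mul_smul_comm, mul_one, h1]
  have mwe : w * e = nb • v + sg' • w := by
    have h1 := hK w v w bw1 bv1
    rw [bwv, mww, mul_smul_comm, mul_one] at h1
    rw [he, mul_sub, mul_smul_comm, mul_one, hsg']
    linear_combination (norm := module) h1
  have mev : e * v = (-(2 * g)) • (1 : A) + (na • w + sg • v) := by
    have h := hpol e v
    rw [be1, bv1, bev, mve] at h
    linear_combination (norm := module) h
  have mew : e * w = (-(2 * d)) • (1 : A) - nb • v - sg' • w := by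
    have h := hpol e w
    rw [be1, bw1, bew, mwe] at h
    linear_combination (norm := module) h
  have mee : e * e = (-ne') • (1 : A) := by rw [hne]; exact hq0 e be1
  -- the three key vector identities
  have W1 : (na * nb - sg * sg' - ne') • (1 : A) + (-(2 * d)) • v + (2 * g) • w
      + (sg - sg') • e = 0 := by
    have h := hK v e w bv1 be1
    rw [bve, mew, mvw] at h
    simp only [mul_add, mul_sub, mul_smul_comm, mul_one, mvv, mvw, mee] at h
    linear_combination (norm := module) h
  have W3 : (-(2 * (na * d)) - 2 * (sg * g)) • (1 : A)
      + (sg * sg - na * nb + ne') • v + (na * (sg - sg')) • w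
      + (-(2 * g)) • e = 0 := by
    have h := hla e v
    rw [mee, smul_mul_assoc, one_mul, mev] at h
    simp only [mul_add, mul_sub, mul_smul_comm, mul_one, mew, mev] at h
    linear_combination (norm := module) h
  have W4 : (2 * (nb * g) + 2 * (sg' * d)) • (1 : A)
      + (nb * (sg' - sg)) • v + (sg' * sg' - na * nb + ne') • w
      + (-(2 * d)) • e = 0 := by
    have h := hla e w
    rw [mee, smul_mul_assoc, one_mul, mew] at h
    simp only [mul_add, mul_sub, mul_smul_comm, mul_one, mew, mev] at h
    linear_combination (norm := module) h
  -- scalar projections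
  have E1 : na * nb - sg * sg' - ne' = 0 := by
    have t := congrArg (fun z : A => B z (1 : A)) W1
    simp only [map_add, map_smul, map_zero, LinearMap.add_apply, LinearMap.smul_apply,
      LinearMap.zero_apply, smul_eq_mul, b11, bv1, bw1, be1] at t
    linear_combination t
  have E2 : (-(2 * d)) * na + (2 * g) * pi + (sg - sg') * g = 0 := by
    have t := congrArg (fun z : A => B z v) W1
    simp only [map_add, map_smul, map_zero, LinearMap.add_apply, LinearMap.smul_apply,
      LinearMap.zero_apply, smul_eq_mul, b1v, bvv, bwv, bev] at t
    linear_combination t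
  have E3 : (-(2 * d)) * pi + (2 * g) * nb + (sg - sg') * d = 0 := by
    have t := congrArg (fun z : A => B z w) W1
    simp only [map_add, map_smul, map_zero, LinearMap.add_apply, LinearMap.smul_apply,
      LinearMap.zero_apply, smul_eq_mul, b1w, bvw, bww, bew] at t
    linear_combination t
  have E4 : (sg - sg') * ne' = 0 := by
    have t := congrArg (fun z : A => B z e) W1
    simp only [map_add, map_smul, map_zero, LinearMap.add_apply, LinearMap.smul_apply,
      LinearMap.zero_apply, smul_eq_mul, b1e, bve, bwe, bee] at t
    linear_combination t
  have E5 : -(2 * (na * d)) - 2 * (sg * g) = 0 := by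
    have t := congrArg (fun z : A => B z (1 : A)) W3
    simp only [map_add, map_smul, map_zero, LinearMap.add_apply, LinearMap.smul_apply,
      LinearMap.zero_apply, smul_eq_mul, b11, bv1, bw1, be1] at t
    linear_combination t
  have E6 : (sg * sg - na * nb + ne') * na + (na * (sg - sg')) * pi
      - 2 * (g * g) = 0 := by
    have t := congrArg (fun z : A => B z v) W3
    simp only [map_add, map_smul, map_zero, LinearMap.add_apply, LinearMap.smul_apply,
      LinearMap.zero_apply, smul_eq_mul, b1v, bvv, bwv, bev] at t
    linear_combination t
  have E7 : (sg * sg - na * nb + ne') * pi + (na * (sg - sg')) * nb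
      - 2 * (g * d) = 0 := by
    have t := congrArg (fun z : A => B z w) W3
    simp only [map_add, map_smul, map_zero, LinearMap.add_apply, LinearMap.smul_apply,
      LinearMap.zero_apply, smul_eq_mul, b1w, bvw, bww, bew] at t
    linear_combination t
  have E8 : 2 * (nb * g) + 2 * (sg' * d) = 0 := by
    have t := congrArg (fun z : A => B z (1 : A)) W4
    simp only [map_add, map_smul, map_zero, LinearMap.add_apply, LinearMap.smul_apply,
      LinearMap.zero_apply, smul_eq_mul, b11, bv1, bw1, be1] at t
    linear_combination t
  have E9 : (nb * (sg' - sg)) * pi + (sg' * sg' - na * nb + ne') * nb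
      - 2 * (d * d) = 0 := by
    have t := congrArg (fun z : A => B z w) W4
    simp only [map_add, map_smul, map_zero, LinearMap.add_apply, LinearMap.smul_apply,
      LinearMap.zero_apply, smul_eq_mul, b1w, bvw, bww, bew] at t
    linear_combination t
  have E10 : (nb * (sg' - sg)) * na + (sg' * sg' - na * nb + ne') * pi
      - 2 * (d * g) = 0 := by
    have t := congrArg (fun z : A => B z v) W4
    simp only [map_add, map_smul, map_zero, LinearMap.add_apply, LinearMap.smul_apply,
      LinearMap.zero_apply, smul_eq_mul, b1v, bvv, bwv, bev] at t
    linear_combination t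
  -- scalar endgame
  have hΔ0 : sg - sg' = 0 := by
    by_contra hΔ
    have hg0 : g = 0 := by
      have h' : 2 * (g * (sg - sg')) = 0 := by
        linear_combination E2 - E5 - g * hsg'
      exact (mul_eq_zero.mp (half _ h')).resolve_right hΔ
    have hd0 : d = 0 := by
      have h' : 2 * (d * (sg - sg')) = 0 := by
        linear_combination E3 - E8 + d * hsg'
      exact (mul_eq_zero.mp (half _ h')).resolve_right hΔ
    have hna0 : na = 0 := by
      have h' : na * ((sg - sg') * (sg - sg')) = 0 := by
        linear_combination 2 * E6 - (na * (sg - sg')) * hsg' + 2 * na * E1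
          + 4 * g * hg0
      exact ((mul_eq_zero.mp h').resolve_right
        (fun hc => hΔ ((mul_eq_zero.mp hc).elim id id)))
    have hnb0 : nb = 0 := by
      have h' : nb * ((sg - sg') * (sg - sg')) = 0 := by
        linear_combination 2 * E9 + (nb * (sg - sg')) * hsg' + 2 * nb * E1
          + 4 * d * hd0
      exact ((mul_eq_zero.mp h').resolve_right
        (fun hc => hΔ ((mul_eq_zero.mp hc).elim id id)))
    have hne0 : ne' = 0 := by
      exact (mul_eq_zero.mp E4).resolve_left hΔ
    have hss : sg * sg' = 0 := by
      linear_combination -E1 + nb * hna0 - hne0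
    have hsg0 : sg = 0 := by
      have h' : sg * (sg * sg) = 0 := by
        linear_combination (-2) * E7 - sg * hss + (sg * sg) * hsg'
          + (2 * (sg - sg') * nb - 2 * nb * pi) * hna0 + 2 * pi * hne0
          - 4 * g * hd0
      exact cube _ h'
    have hsg'0 : sg' = 0 := by
      have h' : sg' * (sg' * sg') = 0 := by
        linear_combination (-2) * E10 - sg' * hss + (sg' * sg') * hsg'
          + (2 * (sg' - sg) * nb - 2 * nb * pi) * hna0 + 2 * pi * hne0
          - 4 * g * hd0
      exact cube _ h'
    exact hΔ (by rw [hsg0, hsg'0, sub_zero])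
  have hgg : g = 0 := by
    have h6 : 2 * (g * g) = 0 := by
      linear_combination -E6 + (na * sg + na * pi) * hΔ0 - na * E1
    exact mul_self_eq_zero.mp (half _ h6)
  have hdd : d = 0 := by
    have h9 : 2 * (d * d) = 0 := by
      linear_combination -E9 - (nb * pi + nb * sg') * hΔ0 - nb * E1
    exact mul_self_eq_zero.mp (half _ h9)
  have hpi' : pi = -sg := by
    have h' : 2 * (pi + sg) = 0 := by
      linear_combination hΔ0 + hsg'
    have h'' := half _ h'
    linear_combination h''
  have hnee : ne' = na * nb - sg * sg := by
    linear_combination -E1 + sg * hΔ0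
  -- final assembly
  have hab : a * b = (α * β + sg) • (1 : A) + (β • v + (α • w + e)) := by
    rw [ha, hb']
    simp only [add_mul, mul_add, smul_mul_assoc, mul_smul_comm, one_mul, mul_one, mvw]
    module
  have bvw' : B v w = -sg := by rw [bvw, hpi']
  have bwv' : B w v = -sg := by rw [bwv, hpi']
  have bve' : B v e = 0 := by rw [bve, hgg]
  have bev' : B e v = 0 := by rw [bev, hgg]
  have bwe' : B w e = 0 := by rw [bwe, hdd]
  have bew' : B e w = 0 := by rw [bew, hdd]
  have bee' : B e e = na * nb - sg * sg := by rw [bee, hnee]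
  rw [hab, ha, hb']
  simp only [map_add, map_smul, LinearMap.add_apply, LinearMap.smul_apply,
    smul_eq_mul, b11, bv1, bw1, be1, b1v, b1w, b1e, bvv, bww, bvw', bwv',
    bve', bev', bwe', bew', bee']
  ring
end

section
/- Let A be a flexible quadratic algebra over a field F of characteristic not 2 that is locally a field extension of F, and let a, b ∈ A. Then ab = 0 if and only if ba = 0. -/
/-- In a flexible quadratic algebra over a field of characteristic not `2`
which is locally a field extension of `F` (equivalently `⟨a,a⟩ = 0 → a = 0`),
`ab = 0` iff `ba = 0`. -/
theorem quadratic_flexible_mul_eq_zero_comm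
    {F A : Type*} [Field F] [NonAssocRing A] [Nontrivial A]
    [Module F A] [SMulCommClass F A A] [IsScalarTower F A A]
    (h2 : (2 : F) ≠ 0)
    (hquad : ∀ a : A, ∃ r s : F, a * a = r • a + s • (1 : A))
    (hflex : ∀ a b : A, (a * b) * a = a * (b * a))
    (B : A →ₗ[F] A →ₗ[F] F)
    (hsymm : ∀ a b : A, B a b = B b a)
    (hB : ∀ a : A, a * a - (2 * B a 1) • a + (B a a) • (1 : A) = 0)
    (hloc : ∀ a : A, B a a = 0 → a = 0)
    (a b : A) :
    a * b = 0 ↔ b * a = 0 := by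
  have hone : ∀ s : F, s • (1 : A) = 0 → s = 0 := by
    intro s hs
    by_contra h
    have : (1 : A) = 0 := by
      calc (1 : A) = s⁻¹ • (s • (1 : A)) := by rw [smul_smul, inv_mul_cancel₀ h, one_smul]
        _ = 0 := by rw [hs, smul_zero]
    exact one_ne_zero this
  have hB11 : B 1 1 = 1 := by
    have h := hB 1
    rw [mul_one] at h
    have h' : (1 - 2 * B 1 1 + B 1 1) • (1 : A) = 0 := by
      rw [add_smul, sub_smul, one_smul]; exact h
    have h'' := hone _ h'
    linear_combination -h''
  have key : ∀ a b : A, a * b = 0 → b * a = 0 := by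
    clear hquad h2 a b
    intro a b hab
    set α := 2 * B a 1 with hα
    set β := 2 * B b 1 with hβ
    set γ := 2 * B a b with hγ
    have ha2 : a * a = α • a - (B a a) • (1 : A) := by
      linear_combination (norm := module) hB a
    have hb2 : b * b = β • b - (B b b) • (1 : A) := by
      linear_combination (norm := module) hB b
    have hc : b * a = α • b + β • a - γ • (1 : A) := by
      have h := hB (a + b)
      have hexp : (a + b) * (a + b) = a * a + (a * b + (b * a + b * b)) := by
        rw [mul_add, add_mul, add_mul]; abel
      rw [hexp, map_add, LinearMap.add_apply, map_add, LinearMap.add_apply,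
        LinearMap.add_apply, hsymm b a] at h
      linear_combination (norm := module) h - hB a - hB b - hab
    have hac : a * (b * a) = 0 := by rw [← hflex a b, hab, zero_mul]
    have hcb : (b * a) * b = 0 := by rw [hflex b a, hab, mul_zero]
    have hA : (α * β - γ) • a = (β * B a a) • (1 : A) := by
      rw [hc, mul_sub, mul_add, mul_smul_comm, mul_smul_comm, mul_smul_comm, hab,
        smul_zero, mul_one, ha2] at hac
      linear_combination (norm := module) hac
    have hBb : (α * β - γ) • b = (α * B b b) • (1 : A) := by
      rw [hc, sub_mul, add_mul, smul_mul_assoc, smul_mul_assoc, smul_mul_assoc, hab,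
        smul_zero, one_mul, hb2] at hcb
      linear_combination (norm := module) hcb
    by_cases hδ : α * β - γ = 0
    · rw [hδ, zero_smul] at hA hBb
      have h1 : β * B a a = 0 := hone _ hA.symm
      have h2 : α * B b b = 0 := hone _ hBb.symm
      have hγ' : γ = α * β := (sub_eq_zero.mp hδ).symm
      apply hloc
      rw [hc]
      simp only [map_add, map_sub, map_smul, LinearMap.add_apply, LinearMap.sub_apply,
        LinearMap.smul_apply, smul_eq_mul]
      rw [hsymm b a, hsymm b 1, hsymm 1 a, hsymm 1 1, hsymm 1 b, hB11]
      linear_combination α * h2 + β * h1 - α * β * hγ + α * γ * hβ + β * γ * hα + γ * hγ'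
    · obtain ⟨s, hs⟩ : ∃ s : F, a = s • (1 : A) :=
        ⟨(α * β - γ)⁻¹ * (β * B a a), by
          rw [mul_smul, ← hA, smul_smul, inv_mul_cancel₀ hδ, one_smul]⟩
      obtain ⟨t, ht⟩ : ∃ t : F, b = t • (1 : A) :=
        ⟨(α * β - γ)⁻¹ * (α * B b b), by
          rw [mul_smul, ← hBb, smul_smul, inv_mul_cancel₀ hδ, one_smul]⟩
      rw [hs, ht] at hab ⊢
      rw [smul_mul_assoc, mul_smul_comm, mul_one, smul_smul] at hab ⊢
      rw [mul_comm t s]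
      exact hab
  exact ⟨key a b, key b a⟩
end

section
/- Let A be a commutative quadratic algebra over a field F of characteristic not 2 with no nontrivial zero-divisors. Then A is a field extension of F of degree at most two. -/
/-- A commutative quadratic algebra over a field of characteristic not `2` with
no nontrivial zero-divisors is a field extension of `F` of degree at most two:
it has dimension at most `2`, is associative, and every nonzero element is
invertible. -/
theorem commutative_quadratic_noZeroDivisors_field
    {F A : Type*} [Field F] [NonAssocRing A] [Nontrivial A]
    [Module F A] [SMulCommClass F A A] [IsScalarTower F A A]
    (h2 : (2 : F) ≠ 0)
    (hquad : ∀ a : A, ∃ r s : F, a * a = r • a + s • (1 : A))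
    (hcomm : ∀ a b : A, a * b = b * a)
    (hzd : ∀ a b : A, a * b = 0 → a = 0 ∨ b = 0) :
    Module.rank F A ≤ 2 ∧ (∀ a b c : A, (a * b) * c = a * (b * c)) ∧
      (∀ a : A, a ≠ 0 → ∃ b : A, a * b = 1) := by
  classical
  have hsmul : ∀ (c d : F) (x y : A), (c • x) * (d • y) = (c * d) • (x * y) := by
    intro c d x y
    rw [smul_mul_assoc, mul_smul_comm, smul_smul]
  have h4 : (4 : F) ≠ 0 := by
    have : (4 : F) = 2 * 2 := by norm_num
    rw [this]
    exact mul_ne_zero h2 h2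
  have main : ∃ (a : A) (r s : F), a * a = r • a + s • (1 : A) ∧
      ∀ b : A, ∃ p q : F, b = p • (1 : A) + q • a := by
    by_cases hA : ∀ b : A, ∃ p : F, b = p • (1 : A)
    · refine ⟨1, 0, 1, by simp, fun b => ?_⟩
      obtain ⟨p, hp⟩ := hA b
      exact ⟨p, 0, by simp [hp]⟩
    · push_neg at hA
      obtain ⟨b₀, hb₀⟩ := hA
      obtain ⟨r, s, har⟩ := hquad b₀
      set α : F := s + r ^ 2 / 4 with hα
      set a : A := b₀ - (r / 2) • (1 : A) with hadef
      have ha2 : a * a = α • (1 : A) := by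
        rw [hadef, hα]
        simp only [sub_mul, mul_sub, smul_mul_assoc, mul_smul_comm, mul_one, one_mul, har]
        match_scalars <;> field_simp [h4] <;> ring
      have F2 : ∀ p : F, a ≠ p • (1 : A) := by
        intro p hp
        apply hb₀ (p + r / 2)
        have hb : b₀ = a + (r / 2) • (1 : A) := by rw [hadef]; abel
        rw [hb, hp, add_smul]
      have F3 : a ≠ 0 := fun h => F2 0 (by simp [h])
      refine ⟨a, 0, α, by simpa using ha2, ?_⟩
      intro b
      by_contra hb
      push_neg at hb
      obtain ⟨t, u, hbt⟩ := hquad b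
      set β : F := u + t ^ 2 / 4 with hβ
      set b' : A := b - (t / 2) • (1 : A) with hbdef
      have hb2 : b' * b' = β • (1 : A) := by
        rw [hbdef, hβ]
        simp only [sub_mul, mul_sub, smul_mul_assoc, mul_smul_comm, mul_one, one_mul, hbt]
        match_scalars <;> field_simp [h4] <;> ring
      have F1 : ∀ p q : F, b' ≠ p • (1 : A) + q • a := by
        intro p q hp
        apply hb (p + t / 2) q
        have hbb : b = b' + (t / 2) • (1 : A) := by rw [hbdef]; abel
        rw [hbb, hp, add_smul]
        module
      have indep : ∀ x y z : F, x • a + y • b' + z • (1 : A) = 0 → x = 0 ∧ y = 0 := by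
        intro x y z h
        by_cases hy : y = 0
        · subst hy
          refine ⟨?_, rfl⟩
          by_contra hx
          have hxa : x • a = (-z) • (1 : A) := by
            linear_combination (norm := module) h
          apply F2 (x⁻¹ * (-z))
          rw [← inv_smul_smul₀ hx a, hxa, smul_smul]
        · exfalso
          have hyb : y • b' = (-x) • a + (-z) • (1 : A) := by
            linear_combination (norm := module) h
          apply F1 (y⁻¹ * (-z)) (y⁻¹ * (-x))
          have h1 : b' = y⁻¹ • ((-x) • a + (-z) • (1 : A)) := by
            rw [← hyb, inv_smul_smul₀ hy]
          rw [h1]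
          module
      obtain ⟨p₁, q₁, hE1⟩ := hquad (a + b')
      obtain ⟨p₂, q₂, hE2⟩ := hquad (a - b')
      have hsum : (p₁ + p₂) • a + (p₁ - p₂) • b' + ((q₁ + q₂) - (2 * α + 2 * β)) • (1 : A)
          = 0 := by
        have expand : (a + b') * (a + b') + (a - b') * (a - b') = (2 * α + 2 * β) • (1 : A) := by
          simp only [mul_add, add_mul, mul_sub, sub_mul, ha2, hb2, hcomm b' a]
          module
        rw [hE1, hE2] at expand
        linear_combination (norm := module) expand
      obtain ⟨h₁, h₂⟩ := indep _ _ _ hsum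
      have hp₁ : p₁ = 0 := by
        have h3 : 2 * p₁ = 0 := by linear_combination h₁ + h₂
        rcases mul_eq_zero.mp h3 with h | h
        · exact absurd h h2
        · exact h
      have habd : (2 : F) • (a * b') = (q₁ - α - β) • (1 : A) := by
        have expand : (a + b') * (a + b') = (α + β) • (1 : A) + (2 : F) • (a * b') := by
          simp only [mul_add, add_mul, ha2, hb2, hcomm b' a]
          module
        rw [hE1, hp₁] at expand
        linear_combination (norm := module) -expand
      set μ : F := 2⁻¹ * (q₁ - α - β) with hμ
      have hab : a * b' = μ • (1 : A) := by
        rw [← inv_smul_smul₀ h2 (a * b'), habd, smul_smul, hμ]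
      have hαne : α ≠ 0 := by
        intro h
        rcases hzd a a (by rw [ha2, h, zero_smul]) with h' | h' <;> exact F3 h'
      have hzero : a * (b' - (α⁻¹ * μ) • a) = 0 := by
        rw [mul_sub, hab, mul_smul_comm, ha2, smul_smul]
        rw [show α⁻¹ * μ * α = μ by field_simp]
        exact sub_self _
      rcases hzd _ _ hzero with h | h
      · exact F3 h
      · apply F1 0 (α⁻¹ * μ)
        rw [sub_eq_zero] at h
        rw [h]
        module
  obtain ⟨a, r, s, ha, hall⟩ := main
  have htop : Submodule.span F ({1, a} : Set A) = ⊤ := by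
    rw [Submodule.eq_top_iff']
    intro x
    obtain ⟨p, q, hx⟩ := hall x
    rw [hx]
    exact Submodule.add_mem _
      (Submodule.smul_mem _ _ (Submodule.subset_span (by simp)))
      (Submodule.smul_mem _ _ (Submodule.subset_span (by simp)))
  have key : ∀ p q u v : F, (p • (1 : A) + q • a) * (u • (1 : A) + v • a)
      = (p * u + q * v * s) • (1 : A) + (p * v + q * u + q * v * r) • a := by
    intro p q u v
    simp only [add_mul, mul_add, hsmul, one_mul, mul_one, ha]
    module
  refine ⟨?_, ?_, ?_⟩
  · have h1 := rank_span_le (R := F) ({1, a} : Set A)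
    rw [htop, rank_top] at h1
    refine h1.trans ?_
    refine le_trans (Cardinal.mk_insert_le ..) ?_
    rw [Cardinal.mk_singleton]
    norm_num
  · intro x y z
    obtain ⟨p, q, hx⟩ := hall x
    obtain ⟨u, v, hy⟩ := hall y
    obtain ⟨w, e, hz⟩ := hall z
    rw [hx, hy, hz, key, key, key, key]
    module
  · have hfin : Module.Finite F A := by
      rw [Module.finite_def]
      exact ⟨{1, a}, by simpa using htop⟩
    intro x hx
    have hinj : Function.Injective (LinearMap.mulLeft F x) := by
      intro u v huv
      simp only [LinearMap.mulLeft_apply] at huv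
      have hs : x * (u - v) = 0 := by rw [mul_sub, huv]; exact sub_self _
      rcases hzd _ _ hs with h | h
      · exact absurd h hx
      · exact sub_eq_zero.mp h
    obtain ⟨y, hy⟩ := LinearMap.surjective_of_injective hinj 1
    exact ⟨y, hy⟩
end
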